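/- arXiv:math/0701822 — 3 statements merged into one kernel-verified Lean document; each statement's English description precedes it below -/
import Mathlib

section
/- Let f be a meromorphic almost periodic function on a horizontal strip S, let N be its set of zeros and P its set of poles. Then the zeros and poles of f are separated inside S: for every substrip S' ⊂⊂ S there exists δ > 0 such that |z − z'| ≥ δ for all z ∈ N ∩ S' and z' ∈ P ∩ S'. -/
open Complex Filter Topology OnePoint Set MeasureTheory

noncomputable section

/-- The open horizontal strip `{z : a < Im z < b}` with extended-real bounds. -/
def Strip (a b : EReal) : Set ℂ := {z : ℂ | a < (z.im : EReal) ∧ (z.im : EReal) < b}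

/-- A set `E ⊆ ℝ` is relatively dense. -/
def RelDense (E : Set ℝ) : Prop := ∃ L > (0 : ℝ), ∀ x : ℝ, ∃ τ ∈ E, x ≤ τ ∧ τ ≤ x + L

/-- The spherical (chordal) metric on `ℂ ∪ {∞}`. -/
def sphDist : OnePoint ℂ → OnePoint ℂ → ℝ
  | (z : ℂ), (w : ℂ) => ‖z - w‖ /
      (Real.sqrt (1 + ‖z‖ ^ 2) * Real.sqrt (1 + ‖w‖ ^ 2))
  | (z : ℂ), ∞ => 1 / Real.sqrt (1 + ‖z‖ ^ 2)
  | ∞, (w : ℂ) => 1 / Real.sqrt (1 + ‖w‖ ^ 2)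
  | ∞, ∞ => 0

/-- Inversion `w ↦ 1/w` on the Riemann sphere. -/
def sphInv : OnePoint ℂ → OnePoint ℂ
  | (z : ℂ) => if z = 0 then ∞ else ((z⁻¹ : ℂ) : OnePoint ℂ)
  | ∞ => ((0 : ℂ) : OnePoint ℂ)

/-- `f : ℂ → ℂ ∪ {∞}` is meromorphic on an (open) set `U`: near every point of `U`
it is either given by an analytic function, or is the reciprocal of an analytic
function that does not vanish identically near the point (poles and the value `∞`
occurring exactly at the zeros of that function). -/
def SphMeromorphicOn (f : ℂ → OnePoint ℂ) (U : Set ℂ) : Prop :=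
  ∀ z₀ ∈ U,
    (∃ g : ℂ → ℂ, AnalyticAt ℂ g z₀ ∧ ∀ᶠ z in nhds z₀, f z = ((g z : ℂ) : OnePoint ℂ)) ∨
    (∃ g : ℂ → ℂ, AnalyticAt ℂ g z₀ ∧ ¬ (∀ᶠ z in nhds z₀, g z = 0) ∧
      ∀ᶠ z in nhds z₀, f z = sphInv (g z))

/-- Meromorphic almost periodic function on the strip `{a < Im z < b}`. -/
def MeromorphicAPOn (f : ℂ → OnePoint ℂ) (a b : EReal) : Prop :=
  SphMeromorphicOn f (Strip a b) ∧
  ∀ ε > (0 : ℝ), ∀ α β : ℝ, a < (α : EReal) → α < β → (β : EReal) < b →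
    RelDense {τ : ℝ | ∀ z ∈ Strip (α : EReal) (β : EReal), sphDist (f (z + τ)) (f z) < ε}

/-- Analytic almost periodic function on the strip `{a < Im z < b}`. -/
def AnalyticAPOn (g : ℂ → ℂ) (a b : EReal) : Prop :=
  DifferentiableOn ℂ g (Strip a b) ∧
  ∀ ε > (0 : ℝ), ∀ α β : ℝ, a < (α : EReal) → α < β → (β : EReal) < b →
    RelDense {τ : ℝ | ∀ z ∈ Strip (α : EReal) (β : EReal), ‖g (z + τ) - g z‖ < ε}

/-- `f` has a zero of order `m` at `c`. -/
def ZeroOfOrder (f : ℂ → OnePoint ℂ) (c : ℂ) (m : ℕ) : Prop :=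
  0 < m ∧ ∃ h : ℂ → ℂ, AnalyticAt ℂ h c ∧ h c ≠ 0 ∧
    ∀ᶠ z in nhds c, f z = (((z - c) ^ m * h z : ℂ) : OnePoint ℂ)

/-- `f` has a pole of order `m` at `c`. -/
def PoleOfOrder (f : ℂ → OnePoint ℂ) (c : ℂ) (m : ℕ) : Prop :=
  0 < m ∧ ∃ h : ℂ → ℂ, AnalyticAt ℂ h c ∧ h c ≠ 0 ∧
    ∀ᶠ z in nhds c, f z = sphInv (((z - c) ^ m * h z : ℂ))

/-- Almost periodic (continuous) function on the real line. -/
def APFunction (u : ℝ → ℝ) : Prop :=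
  Continuous u ∧ ∀ ε > (0 : ℝ), RelDense {τ : ℝ | ∀ x : ℝ, |u (x + τ) - u x| < ε}

lemma aux_zero {v : ℂ} (h : sphDist (v : OnePoint ℂ) ((0:ℂ) : OnePoint ℂ) < 1/3) :
    ‖v‖ ≤ 1/2 := by
  have hd : sphDist (v : OnePoint ℂ) ((0:ℂ) : OnePoint ℂ)
      = ‖v‖ / Real.sqrt (1 + ‖v‖ ^ 2) := by simp [sphDist]
  rw [hd] at h
  set A := ‖v‖ with hA
  have hA0 : 0 ≤ A := norm_nonneg v
  have hs0 : 0 < Real.sqrt (1 + A ^ 2) := Real.sqrt_pos.mpr (by positivity)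
  have hs : Real.sqrt (1 + A ^ 2) ^ 2 = 1 + A ^ 2 := Real.sq_sqrt (by positivity)
  rw [div_lt_iff₀ hs0] at h
  nlinarith [sq_nonneg (A - 1/2), sq_nonneg (Real.sqrt (1 + A^2))]

lemma aux_inf {v : ℂ} (h : sphDist (v : OnePoint ℂ) ∞ < 1/3) : 2 ≤ ‖v‖ := by
  have hd : sphDist (v : OnePoint ℂ) ∞ = 1 / Real.sqrt (1 + ‖v‖ ^ 2) := rfl
  rw [hd] at h
  set A := ‖v‖ with hA
  have hA0 : 0 ≤ A := norm_nonneg v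
  have hs0 : 0 < Real.sqrt (1 + A ^ 2) := Real.sqrt_pos.mpr (by positivity)
  have hs : Real.sqrt (1 + A ^ 2) ^ 2 = 1 + A ^ 2 := Real.sq_sqrt (by positivity)
  rw [div_lt_div_iff₀ hs0 (by norm_num : (0:ℝ) < 3)] at h
  nlinarith

lemma aux_inv_zero {v : ℂ} (h : sphDist (sphInv (v : ℂ)) ((0:ℂ) : OnePoint ℂ) < 1/3) :
    2 ≤ ‖v‖ := by
  by_cases hv : v = 0
  · exfalso
    rw [show sphInv (v:ℂ) = ∞ by simp [sphInv, hv]] at h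
    have : sphDist ∞ ((0:ℂ) : OnePoint ℂ) = 1 := by simp [sphDist]
    rw [this] at h; norm_num at h
  · rw [show sphInv (v:ℂ) = ((v⁻¹ : ℂ) : OnePoint ℂ) by simp [sphInv, hv]] at h
    have := aux_zero h
    rw [norm_inv] at this
    have hv0 : 0 < ‖v‖ := norm_pos_iff.mpr hv
    rw [inv_le_comm₀ (by positivity) (by norm_num)] at this
    simpa using this

lemma aux_inv_inf {v : ℂ} (h : sphDist (sphInv (v : ℂ)) ∞ < 1/3) :
    ‖v‖ ≤ 1/2 := by
  by_cases hv : v = 0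
  · simp [hv]
  · rw [show sphInv (v:ℂ) = ((v⁻¹ : ℂ) : OnePoint ℂ) by simp [sphInv, hv]] at h
    have := aux_inf h
    rw [norm_inv] at this
    have hv0 : 0 < ‖v‖ := norm_pos_iff.mpr hv
    rw [le_inv_comm₀ (by norm_num) hv0] at this
    linarith

/-- The zeros and poles of a meromorphic almost periodic function
are separated inside the strip. -/
theorem meromorphicAP_zeros_poles_separated (a b : EReal) (hab : a < b)
    (f : ℂ → OnePoint ℂ) (hf : MeromorphicAPOn f a b) :
    ∀ α β : ℝ, a < (α : EReal) → α < β → (β : EReal) < b →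
      ∃ δ > (0 : ℝ),
        ∀ z ∈ Strip (α : EReal) (β : EReal), ∀ z' ∈ Strip (α : EReal) (β : EReal),
          f z = ((0 : ℂ) : OnePoint ℂ) → f z' = ∞ → δ ≤ ‖z - z'‖ := by
  intro α β hα hαβ hβ
  by_contra hcon
  push_neg at hcon
  -- choose sequences of zeros/poles getting close
  have hseq : ∀ n : ℕ, ∃ z ∈ Strip (α : EReal) (β : EReal),
      ∃ z' ∈ Strip (α : EReal) (β : EReal),
      f z = ((0 : ℂ) : OnePoint ℂ) ∧ f z' = ∞ ∧ ‖z - z'‖ < 1/(n+1) := by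
    intro n
    obtain ⟨z, hz, z', hz', h1, h2, h3⟩ := hcon (1/(n+1)) (by positivity)
    exact ⟨z, hz, z', hz', h1, h2, h3⟩
  choose z hz z' hz' hfz hfz' hlt using hseq
  -- almost periods for ε = 1/3
  obtain ⟨L, hL, hE⟩ := hf.2 (1/3) (by norm_num) α β hα hαβ hβ
  choose τ hτE hτ1 hτ2 using fun n : ℕ => hE (-(z n).re)
  set w : ℕ → ℂ := fun n => z n + (τ n : ℂ) with hw
  set w' : ℕ → ℂ := fun n => z' n + (τ n : ℂ) with hw'
  -- spherical estimates at translated points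
  have hsph : ∀ n, sphDist (f (w n)) (((0:ℂ)) : OnePoint ℂ) < 1/3 := by
    intro n
    have := hτE n (z n) (hz n)
    rwa [hfz n] at this
  have hsph' : ∀ n, sphDist (f (w' n)) ∞ < 1/3 := by
    intro n
    have := hτE n (z' n) (hz' n)
    rwa [hfz' n] at this
  -- compactness
  set K : Set ℂ := (fun p : ℝ × ℝ => (p.1 + p.2 * I : ℂ)) '' (Icc 0 L ×ˢ Icc α β) with hK
  have hKc : IsCompact K := (isCompact_Icc.prod isCompact_Icc).image (by continuity)
  have himz : ∀ n, α < (z n).im ∧ (z n).im < β := by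
    intro n
    obtain ⟨h1, h2⟩ := hz n
    exact ⟨by exact_mod_cast h1, by exact_mod_cast h2⟩
  have hwK : ∀ n, w n ∈ K := by
    intro n
    refine ⟨((w n).re, (w n).im), ⟨?_, ?_⟩, by simpa using Complex.re_add_im (w n)⟩
    · have hre : (w n).re = (z n).re + τ n := by simp [hw]
      show (w n).re ∈ Icc 0 L
      rw [hre]
      exact ⟨by linarith [hτ1 n], by linarith [hτ2 n]⟩
    · have him : (w n).im = (z n).im := by simp [hw]
      show (w n).im ∈ Icc α β
      rw [him]
      exact ⟨(himz n).1.le, (himz n).2.le⟩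
  obtain ⟨c, hcK, φ, hφ, hwc⟩ := hKc.tendsto_subseq hwK
  -- w' ∘ φ also tends to c
  have hw'c : Tendsto (fun n => w' (φ n)) atTop (𝓝 c) := by
    apply hwc.congr_dist
    apply squeeze_zero (fun n => dist_nonneg) (g := fun n : ℕ => (1:ℝ)/(n+1))
    · intro n
      have hsub : (w ∘ φ) n - w' (φ n) = z (φ n) - z' (φ n) := by
        show z (φ n) + ↑(τ (φ n)) - (z' (φ n) + ↑(τ (φ n))) = _
        ring
      have hd : dist ((w ∘ φ) n) (w' (φ n)) = ‖z (φ n) - z' (φ n)‖ := by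
        rw [Complex.dist_eq, hsub]
      rw [hd]
      have h1 : ‖z (φ n) - z' (φ n)‖ < 1/(φ n + 1) := hlt (φ n)
      have h2 : (1:ℝ)/(φ n + 1) ≤ 1/(n+1) := by
        apply one_div_le_one_div_of_le (by positivity)
        have h3 := hφ.le_apply (x := n)
        have h4 : (n:ℝ) ≤ (φ n : ℝ) := Nat.cast_le.mpr h3
        linarith
      linarith
    · exact tendsto_one_div_add_atTop_nhds_zero_nat
  -- c is in the open strip a b
  have hcim : α ≤ c.im ∧ c.im ≤ β := by
    obtain ⟨p, ⟨_, hp2⟩, hpc⟩ := hcK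
    have : c.im = p.2 := by rw [← hpc]; simp
    rw [this]; exact ⟨hp2.1, hp2.2⟩
  have hcS : c ∈ Strip a b := by
    constructor
    · exact lt_of_lt_of_le hα (by exact_mod_cast hcim.1)
    · exact lt_of_le_of_lt (by exact_mod_cast hcim.2 : (c.im : EReal) ≤ (β : EReal)) hβ
  -- meromorphy at c
  rcases hf.1 c hcS with ⟨g, hg, hfg⟩ | ⟨g, hg, -, hfg⟩
  · -- analytic case
    have hgw : Tendsto (fun n => ‖g (w (φ n))‖) atTop (𝓝 (‖g c‖)) :=
      (continuous_norm.tendsto _).comp ((hg.continuousAt.tendsto).comp hwc)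
    have hgw' : Tendsto (fun n => ‖g (w' (φ n))‖) atTop (𝓝 (‖g c‖)) :=
      (continuous_norm.tendsto _).comp ((hg.continuousAt.tendsto).comp hw'c)
    have h1 : ‖g c‖ ≤ 1/2 := by
      apply le_of_tendsto hgw
      filter_upwards [hwc.eventually hfg] with n hn
      simp only [Function.comp_apply] at hn
      have := hsph (φ n)
      rw [hn] at this
      exact aux_zero this
    have h2 : 2 ≤ ‖g c‖ := by
      apply ge_of_tendsto hgw'
      filter_upwards [hw'c.eventually hfg] with n hn
      have := hsph' (φ n)
      rw [hn] at this
      exact aux_inf this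
    linarith
  · -- pole case
    have hgw : Tendsto (fun n => ‖g (w (φ n))‖) atTop (𝓝 (‖g c‖)) :=
      (continuous_norm.tendsto _).comp ((hg.continuousAt.tendsto).comp hwc)
    have hgw' : Tendsto (fun n => ‖g (w' (φ n))‖) atTop (𝓝 (‖g c‖)) :=
      (continuous_norm.tendsto _).comp ((hg.continuousAt.tendsto).comp hw'c)
    have h1 : 2 ≤ ‖g c‖ := by
      apply ge_of_tendsto hgw
      filter_upwards [hwc.eventually hfg] with n hn
      simp only [Function.comp_apply] at hn
      have := hsph (φ n)
      rw [hn] at this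
      exact aux_inv_zero this
    have h2 : ‖g c‖ ≤ 1/2 := by
      apply le_of_tendsto hgw'
      filter_upwards [hw'c.eventually hfg] with n hn
      have := hsph' (φ n)
      rw [hn] at this
      exact aux_inv_inf this
    linarith
end
end

section
/- (Bochner's criterion for meromorphic a.p. functions.) Let f be a meromorphic function on a horizontal strip S. Then f is a meromorphic almost periodic function on S if and only if for every sequence of real numbers (t_n) there exists a subsequence (t'_n) such that the functions z ↦ f(z + t'_n) converge uniformly with respect to the spherical metric on every substrip S' ⊂⊂ S. -/
open Complex Filter Topology OnePoint Set MeasureTheory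

noncomputable section

/-- Stereographic embedding of the Riemann sphere into `ℝ³`. -/
def sphEmb : OnePoint ℂ → EuclideanSpace ℝ (Fin 3)
  | (z : ℂ) => !₂[z.re / (1 + ‖z‖ ^ 2), z.im / (1 + ‖z‖ ^ 2),
      ‖z‖ ^ 2 / (1 + ‖z‖ ^ 2)]
  | ∞ => !₂[0, 0, 1]

lemma onePlusSq_pos (z : ℂ) : (0:ℝ) < 1 + ‖z‖ ^ 2 := by positivity

lemma sphDist_eq (x y : OnePoint ℂ) : sphDist x y = dist (sphEmb x) (sphEmb y) := by
  have key : ∀ u v : EuclideanSpace ℝ (Fin 3), ∀ c : ℝ, 0 ≤ c → c ^ 2 =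
      (u 0 - v 0)^2 + (u 1 - v 1)^2 + (u 2 - v 2)^2 → c = dist u v := by
    intro u v c hc h
    rw [EuclideanSpace.dist_eq]
    rw [show c = Real.sqrt (c ^ 2) by rw [Real.sqrt_sq hc]]
    congr 1
    rw [h, Fin.sum_univ_three]
    simp only [Real.dist_eq, sq_abs]
  induction x using OnePoint.rec with
  | infty =>
    induction y using OnePoint.rec with
    | infty => simp [sphDist, sphEmb, dist_self]
    | coe w =>
      have hB := onePlusSq_pos w
      have h0 : sphDist ∞ (w : OnePoint ℂ) = 1 / Real.sqrt (1 + ‖w‖ ^ 2) := rfl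
      rw [h0]
      apply key
      · positivity
      · simp only [sphEmb, sphDist, Matrix.cons_val_zero, Matrix.cons_val_one, Matrix.head_cons,
          Matrix.cons_val_two, Matrix.tail_cons]
        rw [div_pow, Real.sq_sqrt (by positivity)]
        have hw : ‖w‖ ^ 2 = w.re ^ 2 + w.im ^ 2 := by
          rw [Complex.sq_norm, Complex.normSq_apply]; ring
        field_simp
        nlinarith [hw]
  | coe z =>
    induction y using OnePoint.rec with
    | infty =>
      have hA := onePlusSq_pos z
      have h0 : sphDist (z : OnePoint ℂ) ∞ = 1 / Real.sqrt (1 + ‖z‖ ^ 2) := rfl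
      rw [h0]
      apply key
      · positivity
      · simp only [sphEmb, sphDist, Matrix.cons_val_zero, Matrix.cons_val_one, Matrix.head_cons,
          Matrix.cons_val_two, Matrix.tail_cons]
        rw [div_pow, Real.sq_sqrt (by positivity)]
        have hz : ‖z‖ ^ 2 = z.re ^ 2 + z.im ^ 2 := by
          rw [Complex.sq_norm, Complex.normSq_apply]; ring
        field_simp
        nlinarith [hz]
    | coe w =>
      have hA := onePlusSq_pos z
      have hB := onePlusSq_pos w
      have h0 : sphDist (z : OnePoint ℂ) (w : OnePoint ℂ) = ‖z - w‖ /
          (Real.sqrt (1 + ‖z‖ ^ 2) * Real.sqrt (1 + ‖w‖ ^ 2)) := rfl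
      rw [h0]
      apply key
      · positivity
      · simp only [sphEmb, sphDist, Matrix.cons_val_zero, Matrix.cons_val_one, Matrix.head_cons,
          Matrix.cons_val_two, Matrix.tail_cons]
        rw [div_pow, mul_pow, Real.sq_sqrt (le_of_lt hA), Real.sq_sqrt (le_of_lt hB)]
        have hz : ‖z‖ ^ 2 = z.re ^ 2 + z.im ^ 2 := by
          rw [Complex.sq_norm, Complex.normSq_apply]; ring
        have hw : ‖w‖ ^ 2 = w.re ^ 2 + w.im ^ 2 := by
          rw [Complex.sq_norm, Complex.normSq_apply]; ring
        have hzw : ‖z - w‖ ^ 2 = (z.re - w.re) ^ 2 + (z.im - w.im) ^ 2 := by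
          rw [Complex.sq_norm, Complex.normSq_apply, Complex.sub_re, Complex.sub_im]; ring
        rw [hzw, hz, hw]
        field_simp
        ring

/-- The image sphere. -/
def sphSet : Set (EuclideanSpace ℝ (Fin 3)) :=
  {p | (p 0) ^ 2 + (p 1) ^ 2 + (p 2 - 1/2) ^ 2 = 1/4}

lemma isClosed_sphSet : IsClosed sphSet := by
  have h0 : Continuous fun p : EuclideanSpace ℝ (Fin 3) =>
      (p 0) ^ 2 + (p 1) ^ 2 + (p 2 - 1/2) ^ 2 := by
    have h : ∀ i : Fin 3, Continuous fun p : EuclideanSpace ℝ (Fin 3) => p i := fun i =>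
      (EuclideanSpace.proj (𝕜 := ℝ) i).continuous
    continuity
  exact isClosed_eq h0 continuous_const

lemma sphEmb_mem (x : OnePoint ℂ) : sphEmb x ∈ sphSet := by
  induction x using OnePoint.rec with
  | infty => simp [sphEmb, sphSet]; norm_num
  | coe z =>
    have hA := onePlusSq_pos z
    have hz : ‖z‖ ^ 2 = z.re ^ 2 + z.im ^ 2 := by
      rw [Complex.sq_norm, Complex.normSq_apply]; ring
    simp only [sphEmb, sphSet, Set.mem_setOf_eq, Matrix.cons_val_zero, Matrix.cons_val_one,
      Matrix.head_cons, Matrix.cons_val_two, Matrix.tail_cons]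
    field_simp
    nlinarith [hz]

lemma sphSet_sub_range : sphSet ⊆ Set.range sphEmb := by
  intro p hp
  simp only [sphSet, Set.mem_setOf_eq] at hp
  by_cases h2 : p 2 = 1
  · refine ⟨∞, ?_⟩
    have h01 : (p 0) ^ 2 + (p 1) ^ 2 = 0 := by nlinarith
    have h0 : p 0 = 0 := by nlinarith [sq_nonneg (p 0), sq_nonneg (p 1)]
    have h1 : p 1 = 0 := by nlinarith [sq_nonneg (p 0), sq_nonneg (p 1)]
    ext i
    fin_cases i <;> simp [sphEmb, h0, h1, h2]
  · have h3 : p 2 ≤ 1 := by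
      nlinarith [sq_nonneg (p 0), sq_nonneg (p 1), sq_nonneg (p 2 - 1)]
    have hle : p 2 < 1 := lt_of_le_of_ne h3 h2
    have hA0 : (0:ℝ) < 1 - p 2 := by linarith
    set A : ℝ := 1 / (1 - p 2) with hA
    have hApos : (0:ℝ) < A := by rw [hA]; positivity
    have hAne : A ≠ 0 := ne_of_gt hApos
    refine ⟨((p 0 * A : ℝ) + (p 1 * A : ℝ) * Complex.I : ℂ), ?_⟩
    set z : ℂ := (p 0 * A : ℝ) + (p 1 * A : ℝ) * Complex.I with hzdef
    have hre : z.re = p 0 * A := by simp [hzdef]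
    have him : z.im = p 1 * A := by simp [hzdef]
    have habs : ‖z‖ ^ 2 = (p 0 ^ 2 + p 1 ^ 2) * A ^ 2 := by
      rw [Complex.sq_norm, Complex.normSq_apply, hre, him]; ring
    have hsum : p 0 ^ 2 + p 1 ^ 2 = p 2 * (1 - p 2) := by nlinarith
    have hden : 1 + ‖z‖ ^ 2 = A := by
      rw [habs, hsum, hA]; field_simp; ring
    have c0 : z.re / (1 + ‖z‖ ^ 2) = p 0 := by
      rw [hden, hre, mul_div_assoc, div_self hAne, mul_one]
    have c1 : z.im / (1 + ‖z‖ ^ 2) = p 1 := by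
      rw [hden, him, mul_div_assoc, div_self hAne, mul_one]
    have c2 : ‖z‖ ^ 2 / (1 + ‖z‖ ^ 2) = p 2 := by
      rw [hden, habs, hsum, hA]
      field_simp
    ext i
    fin_cases i
    · exact c0
    · exact c1
    · exact c2

lemma continuous_sphEmb_coe : Continuous fun z : ℂ => sphEmb (z : OnePoint ℂ) := by
  apply (PiLp.continuous_toLp 2 fun _ : Fin 3 => ℝ).comp
  refine continuous_pi fun i => ?_
  have hne : ∀ z : ℂ, (1 + ‖z‖ ^ 2) ≠ 0 := fun z => ne_of_gt (onePlusSq_pos z)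
  have hc : Continuous fun z : ℂ => (1 + ‖z‖ ^ 2) := by
    continuity
  fin_cases i
  · exact (Complex.continuous_re).div hc hne
  · exact (Complex.continuous_im).div hc hne
  · exact ((continuous_norm.pow 2)).div hc hne

lemma sphEmb_sphInv (w : ℂ) : sphEmb (sphInv (w : OnePoint ℂ)) =
    !₂[w.re / (1 + ‖w‖ ^ 2), -w.im / (1 + ‖w‖ ^ 2),
      1 / (1 + ‖w‖ ^ 2)] := by
  by_cases h : w = 0
  · subst h
    have h1 : sphInv ((0:ℂ) : OnePoint ℂ) = ∞ := by simp [sphInv]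
    rw [h1]
    ext i; fin_cases i <;> simp [sphEmb]
  · have h1 : sphInv ((w:ℂ) : OnePoint ℂ) = ((w⁻¹ : ℂ) : OnePoint ℂ) := by simp [sphInv, h]
    rw [h1]
    have hn : Complex.normSq w ≠ 0 := fun h' => h (Complex.normSq_eq_zero.mp h')
    have hpos : (0:ℝ) < Complex.normSq w := lt_of_le_of_ne (Complex.normSq_nonneg w) (Ne.symm hn)
    have habs : ‖w‖ ^ 2 = Complex.normSq w := Complex.sq_norm w
    have habsinv : ‖w⁻¹‖ ^ 2 = (Complex.normSq w)⁻¹ := by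
      rw [norm_inv, inv_pow, habs]
    have hd : 1 + ‖w⁻¹‖ ^ 2 = (Complex.normSq w + 1) / Complex.normSq w := by
      rw [habsinv]; field_simp
    have c0 : (w⁻¹).re / (1 + ‖w⁻¹‖ ^ 2) = w.re / (1 + ‖w‖ ^ 2) := by
      rw [hd, Complex.inv_re, habs]
      field_simp
      ring
    have c1 : (w⁻¹).im / (1 + ‖w⁻¹‖ ^ 2) = -w.im / (1 + ‖w‖ ^ 2) := by
      rw [hd, Complex.inv_im, habs]
      field_simp
      ring
    have c2 : ‖w⁻¹‖ ^ 2 / (1 + ‖w⁻¹‖ ^ 2) = 1 / (1 + ‖w‖ ^ 2) := by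
      rw [hd, habsinv, habs]
      field_simp
      ring
    ext i
    fin_cases i
    · exact c0
    · exact c1
    · exact c2

lemma continuous_sphEmb_sphInv : Continuous fun w : ℂ => sphEmb (sphInv (w : OnePoint ℂ)) := by
  have heq : (fun w : ℂ => sphEmb (sphInv (w : OnePoint ℂ))) = fun w : ℂ =>
      (!₂[w.re / (1 + ‖w‖ ^ 2), -w.im / (1 + ‖w‖ ^ 2),
        1 / (1 + ‖w‖ ^ 2)] : EuclideanSpace ℝ (Fin 3)) := funext sphEmb_sphInv
  rw [heq]
  apply (PiLp.continuous_toLp 2 fun _ : Fin 3 => ℝ).comp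
  refine continuous_pi fun i => ?_
  have hne : ∀ z : ℂ, (1 + ‖z‖ ^ 2) ≠ 0 := fun z => ne_of_gt (onePlusSq_pos z)
  have hc : Continuous fun z : ℂ => (1 + ‖z‖ ^ 2) := by continuity
  fin_cases i
  · exact (Complex.continuous_re).div hc hne
  · exact (Complex.continuous_im.neg).div hc hne
  · exact continuous_const.div hc hne


lemma mem_strip_add_real {α β : EReal} {z : ℂ} (h : z ∈ Strip α β) (τ : ℝ) :
    z + (τ : ℂ) ∈ Strip α β := by
  simpa [Strip, Complex.add_im, Complex.ofReal_im] using h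

lemma strip_subset {α β α' β' : EReal} (h1 : α ≤ α') (h2 : β' ≤ β) :
    Strip α' β' ⊆ Strip α β := fun z hz => ⟨lt_of_le_of_lt h1 hz.1, lt_of_lt_of_le hz.2 h2⟩

lemma exists_approx_lower (a : EReal) (α₀ : ℝ) (h : a < (α₀ : EReal)) :
    ∃ A : ℕ → ℝ, Antitone A ∧ (∀ k, a < (A k : EReal)) ∧ (∀ k, A k ≤ α₀) ∧
      (∀ α : ℝ, a < (α : EReal) → ∃ k, A k ≤ α) := by
  induction a using EReal.rec with
  | bot =>
    refine ⟨fun k => α₀ - k, ?_, ?_, ?_, ?_⟩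
    · intro m n hmn
      have : (m : ℝ) ≤ n := Nat.cast_le.2 hmn
      simp only
      linarith
    · intro k; exact EReal.bot_lt_coe _
    · intro k; simp only; have : (0:ℝ) ≤ k := Nat.cast_nonneg k; linarith
    · intro α _
      obtain ⟨k, hk⟩ := exists_nat_ge (α₀ - α)
      refine ⟨k, ?_⟩
      show α₀ - (k:ℝ) ≤ α
      linarith
  | coe r =>
    have hr : r < α₀ := EReal.coe_lt_coe_iff.1 h
    set d : ℝ := α₀ - r with hd
    have hd0 : 0 < d := by linarith
    refine ⟨fun k => r + d / 2 ^ k, ?_, ?_, ?_, ?_⟩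
    · intro m n hmn
      simp only
      have h1 : (2:ℝ) ^ m ≤ 2 ^ n := pow_le_pow_right₀ one_le_two hmn
      have h2 : (0:ℝ) < 2 ^ m := by positivity
      have := div_le_div_of_nonneg_left (le_of_lt hd0) h2 h1
      linarith
    · intro k
      have : (0:ℝ) < d / 2 ^ k := by positivity
      exact_mod_cast EReal.coe_lt_coe_iff.2 (by linarith : r < r + d / 2 ^ k)
    · intro k
      have h1 : (1:ℝ) ≤ 2 ^ k := one_le_pow₀ one_le_two
      have h2 : d / 2 ^ k ≤ d := by
        rw [div_le_iff₀ (by positivity)]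
        nlinarith
      simp only
      linarith
    · intro α hα
      have hrα : r < α := EReal.coe_lt_coe_iff.1 hα
      obtain ⟨n, hn⟩ := exists_nat_ge (d / (α - r))
      have h2n : (n:ℝ) ≤ 2 ^ n := by
        exact_mod_cast le_of_lt (Nat.lt_two_pow_self (n := n))
      refine ⟨n, ?_⟩
      have hpos : (0:ℝ) < α - r := by linarith
      have hkey : d / 2 ^ n ≤ α - r := by
        rw [div_le_iff₀ (by positivity)]
        have : d / (α - r) ≤ 2 ^ n := le_trans hn h2n
        calc d = (d / (α - r)) * (α - r) := by field_simp
        _ ≤ 2 ^ n * (α - r) := by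
            apply mul_le_mul_of_nonneg_right this (le_of_lt hpos)
        _ = (α - r) * 2 ^ n := by ring
      simp only
      linarith
  | top => exact absurd h (by simp)

lemma exists_approx_upper (b : EReal) (β₀ : ℝ) (h : (β₀ : EReal) < b) :
    ∃ B : ℕ → ℝ, Monotone B ∧ (∀ k, (B k : EReal) < b) ∧ (∀ k, β₀ ≤ B k) ∧
      (∀ β : ℝ, (β : EReal) < b → ∃ k, β ≤ B k) := by
  have h' : -b < ((-β₀ : ℝ) : EReal) := by
    rw [EReal.coe_neg]
    exact EReal.neg_lt_neg_iff.2 h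
  obtain ⟨A, hmono, hlt, hle, hcov⟩ := exists_approx_lower (-b) (-β₀) h'
  refine ⟨fun k => -A k, ?_, ?_, ?_, ?_⟩
  · intro m n hmn; simp only; linarith [hmono hmn]
  · intro k
    have := hlt k
    show ((-A k : ℝ) : EReal) < b
    rw [EReal.coe_neg]
    exact EReal.neg_lt_comm.1 this
  · intro k; show β₀ ≤ -A k; linarith [hle k]
  · intro β hβ
    have h2 : -b < ((-β : ℝ) : EReal) := by
      rw [EReal.coe_neg]; exact EReal.neg_lt_neg_iff.2 hβ
    obtain ⟨k, hk⟩ := hcov (-β) h2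
    refine ⟨k, ?_⟩
    show β ≤ -A k
    linarith


lemma contF {f : ℂ → OnePoint ℂ} {a b : EReal} (hm : SphMeromorphicOn f (Strip a b)) :
    ContinuousOn (fun z => sphEmb (f z)) (Strip a b) := by
  intro z₀ hz₀
  apply ContinuousAt.continuousWithinAt
  rcases hm z₀ hz₀ with ⟨g, hg, hev⟩ | ⟨g, hg, _, hev⟩
  · have hev' : (fun z => sphEmb ((g z : OnePoint ℂ))) =ᶠ[nhds z₀] fun z => sphEmb (f z) :=
      hev.mono fun z hz => by show sphEmb _ = sphEmb (f z); rw [hz]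
    exact ContinuousAt.congr
      (continuous_sphEmb_coe.continuousAt.comp hg.continuousAt) hev'
  · have hev' : (fun z => sphEmb (sphInv ((g z : ℂ) : OnePoint ℂ))) =ᶠ[nhds z₀]
        fun z => sphEmb (f z) := hev.mono fun z hz => by
          show sphEmb _ = sphEmb (f z); rw [hz]
    exact ContinuousAt.congr
      (continuous_sphEmb_sphInv.continuousAt.comp hg.continuousAt) hev'

lemma key_UC {a b : EReal} {F : ℂ → EuclideanSpace ℝ (Fin 3)}
    (hF : ContinuousOn F (Strip a b))
    (hE : ∀ ε > (0:ℝ), ∀ α β : ℝ, a < (α : EReal) → α < β → (β : EReal) < b →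
      RelDense {τ : ℝ | ∀ z ∈ Strip (α : EReal) (β : EReal), dist (F (z + τ)) (F z) < ε})
    {α β : ℝ} (hα : a < (α : EReal)) (hαβ : α < β) (hβ : (β : EReal) < b)
    {ε : ℝ} (hε : 0 < ε) :
    ∃ δ > (0:ℝ), ∀ z w : ℂ, z ∈ Strip (α : EReal) (β : EReal) →
      w ∈ Strip (α : EReal) (β : EReal) → ‖z - w‖ < δ →
      dist (F z) (F w) < ε := by
  obtain ⟨L, hL, hLp⟩ := hE (ε/3) (by positivity) α β hα hαβ hβ
  set K : Set ℂ := {z : ℂ | z.re ∈ Icc (-1) (L+1) ∧ z.im ∈ Icc α β} with hK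
  have hKsub : K ⊆ Strip a b := by
    intro z hz
    exact ⟨lt_of_lt_of_le hα (EReal.coe_le_coe_iff.2 hz.2.1),
      lt_of_le_of_lt (EReal.coe_le_coe_iff.2 hz.2.2) hβ⟩
  have hKcl : IsClosed K := by
    apply IsClosed.inter
    · exact isClosed_Icc.preimage Complex.continuous_re
    · exact isClosed_Icc.preimage Complex.continuous_im
  have hKb : Bornology.IsBounded K := by
    apply (Metric.isBounded_closedBall
      (x := (0:ℂ)) (r := (L + 1) + (|α| + |β|))).subset
    intro z hz
    simp only [Metric.mem_closedBall, Complex.dist_eq, sub_zero]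
    have h1 : |z.re| ≤ L + 1 := abs_le.2 ⟨by linarith [hz.1.1], hz.1.2⟩
    have h2 : |z.im| ≤ |α| + |β| := by
      have := hz.2.1; have := hz.2.2
      rcases abs_cases α with ⟨h3,h4⟩|⟨h3,h4⟩ <;> rcases abs_cases β with ⟨h5,h6⟩|⟨h5,h6⟩ <;>
        rcases abs_cases z.im with ⟨h7,h8⟩|⟨h7,h8⟩ <;> linarith
    calc ‖z‖ ≤ |z.re| + |z.im| := Complex.norm_le_abs_re_add_abs_im z
    _ ≤ (L + 1) + (|α| + |β|) := by linarith
  have hKc : IsCompact K := Metric.isCompact_of_isClosed_isBounded hKcl hKb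
  have hUC := hKc.uniformContinuousOn_of_continuous (hF.mono hKsub)
  obtain ⟨δ₀, hδ₀, hδp⟩ := Metric.uniformContinuousOn_iff.1 hUC (ε/3) (by positivity)
  refine ⟨min δ₀ 1, lt_min hδ₀ one_pos, ?_⟩
  intro z w hz hw hd
  obtain ⟨τ, hτE, hτ1, hτ2⟩ := hLp (-z.re)
  have hzτ : (z + (τ:ℂ)) ∈ K := by
    constructor
    · simp only [Complex.add_re, Complex.ofReal_re, mem_Icc]
      constructor <;> linarith
    · simp only [Complex.add_im, Complex.ofReal_im, add_zero, mem_Icc]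
      exact ⟨le_of_lt (EReal.coe_lt_coe_iff.1 hz.1), le_of_lt (EReal.coe_lt_coe_iff.1 hz.2)⟩
  have hrezw : |w.re - z.re| ≤ ‖z - w‖ := by
    rw [show w.re - z.re = -((z - w).re) by rw [Complex.sub_re]; ring, abs_neg]
    exact Complex.abs_re_le_norm _
  have hd1 : ‖z - w‖ < 1 := lt_of_lt_of_le hd (min_le_right _ _)
  have hwτ : (w + (τ:ℂ)) ∈ K := by
    constructor
    · simp only [Complex.add_re, Complex.ofReal_re, mem_Icc]
      have := abs_le.1 hrezw
      constructor <;> [linarith [this.1, le_of_lt hd1]; linarith [this.2, le_of_lt hd1]]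
    · simp only [Complex.add_im, Complex.ofReal_im, add_zero, mem_Icc]
      exact ⟨le_of_lt (EReal.coe_lt_coe_iff.1 hw.1), le_of_lt (EReal.coe_lt_coe_iff.1 hw.2)⟩
  have hmid : dist (F (z + (τ:ℂ))) (F (w + (τ:ℂ))) < ε/3 := by
    apply hδp _ hzτ _ hwτ
    rw [Complex.dist_eq, show z + (τ:ℂ) - (w + (τ:ℂ)) = z - w by ring]
    exact lt_of_lt_of_le hd (min_le_left _ _)
  have h1 : dist (F (z + (τ:ℂ))) (F z) < ε/3 := hτE z hz
  have h3 : dist (F (w + (τ:ℂ))) (F w) < ε/3 := hτE w hw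
  calc dist (F z) (F w) ≤ dist (F z) (F (z + (τ:ℂ))) + dist (F (z + (τ:ℂ))) (F (w + (τ:ℂ)))
      + dist (F (w + (τ:ℂ))) (F w) := dist_triangle4 _ _ _ _
  _ < ε/3 + ε/3 + ε/3 := by
      have h1' : dist (F z) (F (z + (τ:ℂ))) < ε/3 := by rw [dist_comm]; exact h1
      gcongr
  _ = ε := by ring

lemma key_ext {a b : EReal} {F : ℂ → EuclideanSpace ℝ (Fin 3)}
    (hF : ContinuousOn F (Strip a b))
    (hE : ∀ ε > (0:ℝ), ∀ α β : ℝ, a < (α : EReal) → α < β → (β : EReal) < b →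
      RelDense {τ : ℝ | ∀ z ∈ Strip (α : EReal) (β : EReal), dist (F (z + τ)) (F z) < ε})
    {α β : ℝ} (hα : a < (α : EReal)) (hαβ : α < β) (hβ : (β : EReal) < b)
    {ε : ℝ} (hε : 0 < ε) (s : ℕ → ℝ) :
    ∃ θ : ℕ → ℕ, StrictMono θ ∧ ∀ m n : ℕ, ∀ z ∈ Strip (α : EReal) (β : EReal),
      dist (F (z + s (θ m))) (F (z + s (θ n))) < ε := by
  obtain ⟨δ, hδ, hUC⟩ := key_UC hF hE hα hαβ hβ (show (0:ℝ) < ε/3 by positivity)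
  obtain ⟨L, hL, hLp⟩ := hE (ε/3) (by positivity) α β hα hαβ hβ
  choose τ hτE hτ1 hτ2 using fun n => hLp (s n)
  set u : ℕ → ℝ := fun n => s n - τ n with hu
  have hub : ∀ n, u n ∈ Icc (-L) (0:ℝ) := fun n => ⟨by simp only [hu]; linarith [hτ2 n],
    by simp only [hu]; linarith [hτ1 n]⟩
  obtain ⟨ul, _, φ₁, hφ₁, hconv⟩ := tendsto_subseq_of_bounded (Metric.isBounded_Icc (a := -L) (b := 0)) hub
  have hCau := hconv.cauchySeq
  obtain ⟨N, hN⟩ := Metric.cauchySeq_iff.1 hCau δ hδ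
  refine ⟨fun n => φ₁ (n + N), hφ₁.comp fun x y h => by omega, ?_⟩
  intro m n z hz
  have key : ∀ i : ℕ, ∀ w ∈ Strip (α : EReal) (β : EReal),
      dist (F (w + (s i : ℂ))) (F (w + (u i : ℂ))) < ε/3 := by
    intro i w hw
    have hmem := mem_strip_add_real hw (u i)
    have := hτE i _ hmem
    have harg : w + (u i : ℂ) + (τ i : ℂ) = w + (s i : ℂ) := by
      push_cast [hu]
      ring
    rw [harg] at this
    calc dist (F (w + (s i : ℂ))) (F (w + (u i : ℂ)))
        = dist (F (w + (s i : ℂ))) (F (w + (u i : ℂ))) := rfl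
    _ < ε/3 := this
  have h1 := key (φ₁ (m + N)) z hz
  have h3 := key (φ₁ (n + N)) z hz
  have h2 : dist (F (z + (u (φ₁ (m + N)) : ℂ))) (F (z + (u (φ₁ (n + N)) : ℂ))) < ε/3 := by
    apply hUC _ _ (mem_strip_add_real hz _) (mem_strip_add_real hz _)
    have : z + (u (φ₁ (m + N)) : ℂ) - (z + (u (φ₁ (n + N)) : ℂ))
        = ((u (φ₁ (m + N)) - u (φ₁ (n + N)) : ℝ) : ℂ) := by push_cast; ring
    rw [this, Complex.norm_real]
    have := hN (m + N) (by omega) (n + N) (by omega)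
    rw [Real.dist_eq] at this
    simpa using this
  calc dist (F (z + (s (φ₁ (m + N)) : ℂ))) (F (z + (s (φ₁ (n + N)) : ℂ)))
      ≤ dist (F (z + (s (φ₁ (m + N)) : ℂ))) (F (z + (u (φ₁ (m + N)) : ℂ)))
        + dist (F (z + (u (φ₁ (m + N)) : ℂ))) (F (z + (u (φ₁ (n + N)) : ℂ)))
        + dist (F (z + (u (φ₁ (n + N)) : ℂ))) (F (z + (s (φ₁ (n + N)) : ℂ))) :=
      dist_triangle4 _ _ _ _
  _ < ε/3 + ε/3 + ε/3 := by
      gcongr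
      rw [dist_comm]; exact h3
  _ = ε := by ring


lemma forward_core {a b : EReal} (hab : a < b) {F : ℂ → EuclideanSpace ℝ (Fin 3)}
    (hrange : ∀ z, F z ∈ sphSet)
    (hF : ContinuousOn F (Strip a b))
    (hE : ∀ ε > (0:ℝ), ∀ α β : ℝ, a < (α : EReal) → α < β → (β : EReal) < b →
      RelDense {τ : ℝ | ∀ z ∈ Strip (α : EReal) (β : EReal), dist (F (z + τ)) (F z) < ε})
    (t : ℕ → ℝ) :
    ∃ φ : ℕ → ℕ, StrictMono φ ∧ ∃ p : ℂ → EuclideanSpace ℝ (Fin 3),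
      (∀ z, p z ∈ sphSet) ∧
      ∀ α β : ℝ, a < (α : EReal) → α < β → (β : EReal) < b →
        ∀ ε > (0:ℝ), ∀ᶠ n in atTop, ∀ z ∈ Strip (α : EReal) (β : EReal),
          dist (F (z + t (φ n))) (p z) < ε := by
  classical
  -- base points
  obtain ⟨c, hc1, hc2⟩ := exists_between hab
  obtain ⟨α₀, hα₀1, hα₀2⟩ := EReal.exists_between_coe_real hc1
  obtain ⟨β₀, hβ₀1, hβ₀2⟩ := EReal.exists_between_coe_real hc2
  have hα₀β₀ : α₀ < β₀ := by
    have : (α₀ : EReal) < (β₀ : EReal) := lt_trans hα₀2 hβ₀1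
    exact_mod_cast this
  obtain ⟨A, hAanti, hAgt, hAle, hAcov⟩ := exists_approx_lower a α₀ hα₀1
  obtain ⟨B, hBmono, hBlt, hBge, hBcov⟩ := exists_approx_upper b β₀ hβ₀2
  have hAB : ∀ k, A k < B k := fun k => lt_of_le_of_lt (hAle k)
    (lt_of_lt_of_le hα₀β₀ (hBge k))
  -- extraction at level k
  have EXT : ∀ k : ℕ, ∀ s : ℕ → ℝ, ∃ θ : ℕ → ℕ, StrictMono θ ∧
      ∀ m n : ℕ, ∀ z ∈ Strip (A k : EReal) (B k : EReal),
        dist (F (z + s (θ m))) (F (z + s (θ n))) < 1 / (k + 1 : ℝ) := by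
    intro k s
    exact key_ext hF hE (hAgt k) (hAB k) (hBlt k) (by positivity) s
  -- iterated extraction
  let σ : ℕ → (ℕ → ℕ) := fun k => Nat.rec ((EXT 0 t).choose)
    (fun n prev => prev ∘ (EXT (n+1) (t ∘ prev)).choose) k
  have hσsucc : ∀ n, σ (n+1) = σ n ∘ (EXT (n+1) (t ∘ σ n)).choose := fun n => rfl
  have hσ : ∀ k, StrictMono (σ k) ∧ ∀ m n : ℕ, ∀ z ∈ Strip (A k : EReal) (B k : EReal),
      dist (F (z + t (σ k m))) (F (z + t (σ k n))) < 1 / (k + 1 : ℝ) := by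
    intro k
    induction k with
    | zero => exact ⟨(EXT 0 t).choose_spec.1, by exact_mod_cast (EXT 0 t).choose_spec.2⟩
    | succ n ih =>
      rw [hσsucc n]
      refine ⟨ih.1.comp (EXT (n+1) (t ∘ σ n)).choose_spec.1, ?_⟩
      intro m m' z hz
      have := (EXT (n+1) (t ∘ σ n)).choose_spec.2 m m' z hz
      have h2 : ((n:ℝ) + 1 + 1) = ((n + 1 : ℕ) + 1 : ℝ) := by push_cast; ring
      simpa [Function.comp, h2] using this
  -- representation
  have hrep : ∀ k n, k ≤ n → ∀ i : ℕ, ∃ j : ℕ, σ n i = σ k j := by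
    intro k n
    induction n with
    | zero => intro hk i; exact ⟨i, by rw [Nat.le_zero.1 hk]⟩
    | succ n ih =>
      intro hk i
      rcases Nat.lt_or_ge k (n+1) with h | h
      · obtain ⟨j, hj⟩ := ih (by omega) ((EXT (n+1) (t ∘ σ n)).choose i)
        exact ⟨j, by rw [hσsucc n]; exact hj⟩
      · exact ⟨i, by rw [show k = n + 1 by omega]⟩
  -- diagonal
  set ψ : ℕ → ℕ := fun n => σ n n with hψ
  have hψmono : StrictMono ψ := by
    apply strictMono_nat_of_lt_succ
    intro n
    rw [hψ]
    simp only
    rw [hσsucc n]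
    calc σ n n < σ n (n+1) := (hσ n).1 (by omega)
    _ ≤ σ n ((EXT (n+1) (t ∘ σ n)).choose (n+1)) :=
        (hσ n).1.monotone ((EXT (n+1) (t ∘ σ n)).choose_spec.1.le_apply)
  have hCau : ∀ k m n : ℕ, k ≤ m → k ≤ n → ∀ z ∈ Strip (A k : EReal) (B k : EReal),
      dist (F (z + t (ψ m))) (F (z + t (ψ n))) < 1 / (k + 1 : ℝ) := by
    intro k m n hkm hkn z hz
    obtain ⟨j, hj⟩ := hrep k m hkm m
    obtain ⟨j', hj'⟩ := hrep k n hkn n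
    rw [hψ]
    simp only
    rw [hj, hj']
    exact (hσ k).2 j j' z hz
  -- strips cover
  have hcover : ∀ α β : ℝ, a < (α : EReal) → (β : EReal) < b → ∃ k₀ : ℕ, ∀ k, k₀ ≤ k →
      Strip (α : EReal) (β : EReal) ⊆ Strip (A k : EReal) (B k : EReal) := by
    intro α β hα hβ
    obtain ⟨k₁, hk₁⟩ := hAcov α hα
    obtain ⟨k₂, hk₂⟩ := hBcov β hβ
    refine ⟨max k₁ k₂, fun k hk => ?_⟩
    apply strip_subset
    · exact_mod_cast le_trans (hAanti (le_trans (le_max_left k₁ k₂) hk)) hk₁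
    · exact_mod_cast le_trans hk₂ (hBmono (le_trans (le_max_right k₁ k₂) hk))
  -- limit function
  have hlim : ∀ z ∈ Strip a b, ∃ q : EuclideanSpace ℝ (Fin 3),
      Tendsto (fun n => F (z + t (ψ n))) atTop (nhds q) := by
    intro z hz
    apply cauchySeq_tendsto_of_complete
    rw [Metric.cauchySeq_iff]
    intro ε hε
    obtain ⟨α, hα1, hα2⟩ := EReal.exists_between_coe_real hz.1
    obtain ⟨β, hβ1, hβ2⟩ := EReal.exists_between_coe_real hz.2
    obtain ⟨k₀, hk₀⟩ := hcover α β hα1 hβ2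
    obtain ⟨k₁, hk₁⟩ := exists_nat_one_div_lt hε
    refine ⟨max k₀ k₁, fun m hm n hn => ?_⟩
    have hzk : z ∈ Strip (A (max k₀ k₁) : EReal) (B (max k₀ k₁) : EReal) := by
      apply hk₀ _ (le_max_left k₀ k₁)
      exact ⟨hα2, hβ1⟩
    calc dist (F (z + t (ψ m))) (F (z + t (ψ n)))
        < 1 / ((max k₀ k₁ : ℕ) + 1 : ℝ) := hCau _ m n hm hn z hzk
    _ ≤ 1 / ((k₁ : ℕ) + 1 : ℝ) := by
        apply div_le_div_of_nonneg_left one_pos.le (by positivity)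
        have : (k₁ : ℝ) ≤ (max k₀ k₁ : ℕ) := by exact_mod_cast le_max_right k₀ k₁
        linarith
    _ < ε := hk₁
  set p : ℂ → EuclideanSpace ℝ (Fin 3) := fun z =>
    if h : ∃ q, Tendsto (fun n => F (z + t (ψ n))) atTop (nhds q) then h.choose else F z
    with hp
  have hptend : ∀ z ∈ Strip a b, Tendsto (fun n => F (z + t (ψ n))) atTop (nhds (p z)) := by
    intro z hz
    have h := hlim z hz
    rw [hp]
    simp only [dif_pos h]
    exact h.choose_spec
  have hpmem : ∀ z, p z ∈ sphSet := by
    intro z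
    rw [hp]
    by_cases h : ∃ q, Tendsto (fun n => F (z + t (ψ n))) atTop (nhds q)
    · simp only [dif_pos h]
      exact isClosed_sphSet.mem_of_tendsto h.choose_spec
        (Filter.Eventually.of_forall fun n => hrange _)
    · simp only [dif_neg h]
      exact hrange z
  refine ⟨ψ, hψmono, p, hpmem, ?_⟩
  intro α β hα hαβ hβ ε hε
  obtain ⟨k₀, hk₀⟩ := hcover α β hα hβ
  obtain ⟨k₁, hk₁⟩ := exists_nat_one_div_lt hε
  set k := max k₀ k₁ with hkdef
  rw [Filter.eventually_atTop]
  refine ⟨k, fun n hn z hz => ?_⟩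
  have hzst : z ∈ Strip a b := ⟨lt_trans hα hz.1, lt_trans hz.2 hβ⟩
  have hzk : z ∈ Strip (A k : EReal) (B k : EReal) := hk₀ k (le_max_left k₀ k₁) hz
  have htd : Tendsto (fun m => dist (F (z + t (ψ n))) (F (z + t (ψ m)))) atTop
      (nhds (dist (F (z + t (ψ n))) (p z))) := (tendsto_const_nhds).dist (hptend z hzst)
  have hle : dist (F (z + t (ψ n))) (p z) ≤ 1 / (k + 1 : ℝ) := by
    apply le_of_tendsto htd
    rw [Filter.eventually_atTop]
    exact ⟨k, fun m hm => le_of_lt (hCau k n m hn hm z hzk)⟩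
  calc dist (F (z + t (ψ n))) (p z) ≤ 1 / (k + 1 : ℝ) := hle
  _ ≤ 1 / ((k₁ : ℕ) + 1 : ℝ) := by
      apply div_le_div_of_nonneg_left one_pos.le (by positivity)
      have : (k₁ : ℝ) ≤ (k : ℕ) := by exact_mod_cast le_max_right k₀ k₁
      linarith
  _ < ε := hk₁


/-- **Bochner's criterion.** A meromorphic function on a strip is
almost periodic iff from every sequence of real translates one can extract a
subsequence converging uniformly (w.r.t. the spherical metric) on every substrip. -/
theorem meromorphicAP_iff_bochner (a b : EReal) (hab : a < b)
    (f : ℂ → OnePoint ℂ) (hm : SphMeromorphicOn f (Strip a b)) :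
    MeromorphicAPOn f a b ↔
      ∀ t : ℕ → ℝ, ∃ φ : ℕ → ℕ, StrictMono φ ∧ ∃ g : ℂ → OnePoint ℂ,
        ∀ α β : ℝ, a < (α : EReal) → α < β → (β : EReal) < b →
          ∀ ε > (0 : ℝ), ∀ᶠ n in atTop,
            ∀ z ∈ Strip (α : EReal) (β : EReal), sphDist (f (z + t (φ n))) (g z) < ε := by
  classical
  constructor
  · rintro ⟨-, hap⟩ t
    have hE : ∀ ε > (0:ℝ), ∀ α β : ℝ, a < (α : EReal) → α < β → (β : EReal) < b →
        RelDense {τ : ℝ | ∀ z ∈ Strip (α : EReal) (β : EReal),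
          dist (sphEmb (f (z + τ))) (sphEmb (f z)) < ε} := by
      intro ε hε α β h1 h2 h3
      have hset : {τ : ℝ | ∀ z ∈ Strip (α : EReal) (β : EReal),
          dist (sphEmb (f (z + τ))) (sphEmb (f z)) < ε} =
          {τ : ℝ | ∀ z ∈ Strip (α : EReal) (β : EReal), sphDist (f (z + τ)) (f z) < ε} := by
        ext τ
        simp only [Set.mem_setOf_eq, sphDist_eq]
      rw [hset]
      exact hap ε hε α β h1 h2 h3
    obtain ⟨φ, hφ, p, hpmem, hconv⟩ :=
      forward_core hab (fun z => sphEmb_mem (f z)) (contF hm) hE t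
    set g : ℂ → OnePoint ℂ := fun z =>
      if h : ∃ x : OnePoint ℂ, sphEmb x = p z then h.choose else ∞ with hg
    refine ⟨φ, hφ, g, ?_⟩
    intro α β h1 h2 h3 ε hε
    filter_upwards [hconv α β h1 h2 h3 ε hε] with n hn z hz
    have hx : ∃ x, sphEmb x = p z := sphSet_sub_range (hpmem z)
    have hgz : sphEmb (g z) = p z := by
      rw [hg]
      simp only [dif_pos hx]
      exact hx.choose_spec
    rw [sphDist_eq, hgz]
    exact hn z hz
  · intro hboch
    refine ⟨hm, ?_⟩
    intro ε₀ hε₀ α β h1 h2 h3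
    by_contra hnd
    rw [RelDense] at hnd
    push_neg at hnd
    have hbad : ∀ L : ℝ, 0 < L → ∃ x : ℝ, ∀ τ : ℝ, x ≤ τ → τ ≤ x + L →
        ∃ z ∈ Strip (α : EReal) (β : EReal), ¬ sphDist (f (z + τ)) (f z) < ε₀ := by
      intro L hL
      obtain ⟨x, hx⟩ := hnd L hL
      refine ⟨x, fun τ hτ1 hτ2 => ?_⟩
      by_contra hcon
      push_neg at hcon
      have := hx τ hcon hτ1
      linarith
    set X : ℝ → ℝ := fun L => if h : 0 < L then (hbad L h).choose else 0 with hXdef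
    have hX : ∀ L : ℝ, (h : 0 < L) → ∀ τ : ℝ, X L ≤ τ → τ ≤ X L + L →
        ∃ z ∈ Strip (α : EReal) (β : EReal), ¬ sphDist (f (z + τ)) (f z) < ε₀ := by
      intro L h
      rw [hXdef]
      simp only [dif_pos h]
      exact (hbad L h).choose_spec
    set u : ℕ → ℝ × ℝ := fun n => Nat.rec ((0:ℝ), (0:ℝ))
      (fun _ q => (X (2*(q.2+1)) + (q.2+1), max q.2 |X (2*(q.2+1)) + (q.2+1)|)) n with hu
    have husucc : ∀ n, u (n+1) = (X (2*((u n).2+1)) + ((u n).2+1),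
        max (u n).2 |X (2*((u n).2+1)) + ((u n).2+1)|) := fun n => rfl
    set tt : ℕ → ℝ := fun n => (u n).1 with htt
    have hM0 : ∀ n, 0 ≤ (u n).2 := by
      intro n
      induction n with
      | zero => exact le_refl 0
      | succ k ih => rw [husucc k]; exact le_trans ih (le_max_left _ _)
    have hMmono : Monotone fun n => (u n).2 := by
      apply monotone_nat_of_le_succ
      intro n
      rw [husucc n]
      exact le_max_left _ _
    have htle : ∀ n, |(u n).1| ≤ (u n).2 := by
      intro n
      cases n with
      | zero => simp [hu]
      | succ k => rw [husucc k]; exact le_max_right _ _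
    have hsep : ∀ m n : ℕ, m < n → ∃ z ∈ Strip (α : EReal) (β : EReal),
        ¬ sphDist (f (z + (tt n : ℂ))) (f (z + (tt m : ℂ))) < ε₀ := by
      intro m n hmn
      obtain ⟨k, rfl⟩ : ∃ k, n = k + 1 := ⟨n - 1, by omega⟩
      have hL : 0 < 2 * ((u k).2 + 1) := by linarith [hM0 k]
      have htm : |(u m).1| ≤ (u k).2 := le_trans (htle m) (hMmono (by omega))
      have habs := abs_le.1 htm
      have ht1 : tt (k+1) = X (2*((u k).2+1)) + ((u k).2+1) := by
        show (u (k+1)).1 = _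
        rw [husucc k]
      have hb1 : X (2*((u k).2+1)) ≤ tt (k+1) - tt m := by
        rw [ht1, htt]; simp only; linarith [habs.2]
      have hb2 : tt (k+1) - tt m ≤ X (2*((u k).2+1)) + 2*((u k).2+1) := by
        rw [ht1, htt]; simp only; linarith [habs.1]
      obtain ⟨z₀, hz₀, hzbad⟩ := hX _ hL _ hb1 hb2
      refine ⟨z₀ + ((-(tt m) : ℝ) : ℂ), mem_strip_add_real hz₀ _, ?_⟩
      have e1 : z₀ + ((-(tt m) : ℝ) : ℂ) + (tt (k+1) : ℂ) = z₀ + ((tt (k+1) - tt m : ℝ) : ℂ) := by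
        push_cast; ring
      have e2 : z₀ + ((-(tt m) : ℝ) : ℂ) + (tt m : ℂ) = z₀ := by push_cast; ring
      rw [e1, e2]
      exact hzbad
    obtain ⟨φ, hφ, g, hconv⟩ := hboch tt
    have hev := hconv α β h1 h2 h3 (ε₀/2) (by positivity)
    rw [Filter.eventually_atTop] at hev
    obtain ⟨N, hN⟩ := hev
    obtain ⟨z, hz, hzbad⟩ := hsep (φ N) (φ (N+1)) (hφ (Nat.lt_succ_self N))
    apply hzbad
    calc sphDist (f (z + (tt (φ (N+1)) : ℂ))) (f (z + (tt (φ N) : ℂ)))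
        = dist (sphEmb (f (z + (tt (φ (N+1)) : ℂ)))) (sphEmb (f (z + (tt (φ N) : ℂ)))) :=
        sphDist_eq _ _
    _ ≤ dist (sphEmb (f (z + (tt (φ (N+1)) : ℂ)))) (sphEmb (g z))
        + dist (sphEmb (g z)) (sphEmb (f (z + (tt (φ N) : ℂ)))) := dist_triangle _ _ _
    _ < ε₀/2 + ε₀/2 := by
        gcongr
        · rw [← sphDist_eq]
          exact hN (N+1) (by omega) z hz
        · rw [dist_comm, ← sphDist_eq]
          exact hN N le_rfl z hz
    _ = ε₀ := by ring
end
end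

section
/- Let f be a meromorphic almost periodic function on a horizontal strip S, let (t_n) be a sequence of real numbers, and suppose the functions z ↦ f(z + t_n) converge uniformly with respect to the spherical metric on every substrip S' ⊂⊂ S to a function g. Then g is a meromorphic almost periodic function on S. -/
open Complex Filter Topology OnePoint Set MeasureTheory

noncomputable section

/-- Compatibility: the complex absolute value as a bundled absolute value. -/
def Complex.abs : AbsoluteValue ℂ ℝ := NormedField.toAbsoluteValue ℂ

lemma Complex.norm_eq_abs (z : ℂ) : ‖z‖ = Complex.abs z := rfl

lemma Complex.abs_conj (z : ℂ) : Complex.abs ((starRingEnd ℂ) z) = Complex.abs z :=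
  Complex.norm_conj z

lemma Complex.abs_ofReal (r : ℝ) : Complex.abs (r : ℂ) = |r| := by
  show ‖(r : ℂ)‖ = |r|
  simp

namespace SphAux

lemma le_of_sq_le_sq {x y : ℝ} (h : x ^ 2 ≤ y ^ 2) (hy : 0 ≤ y) : x ≤ y := by
  by_contra h'
  push_neg at h'
  have hx : 0 < x + y := by linarith
  nlinarith [mul_pos (sub_pos.2 h') hx]

/-- `√(1+|u|²)`. -/
def A (u : ℂ) : ℝ := Real.sqrt (1 + Complex.abs u ^ 2)

lemma A_sq (u : ℂ) : A u ^ 2 = 1 + Complex.abs u ^ 2 :=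
  Real.sq_sqrt (by positivity)

lemma one_le_A (u : ℂ) : 1 ≤ A u := by
  rw [show (1:ℝ) = Real.sqrt 1 by simp]
  exact Real.sqrt_le_sqrt (by nlinarith [sq_nonneg (Complex.abs u)])

lemma A_pos (u : ℂ) : 0 < A u := lt_of_lt_of_le one_pos (one_le_A u)

lemma abs_le_A (u : ℂ) : Complex.abs u ≤ A u := by
  have h := Real.sqrt_le_sqrt (show Complex.abs u ^ 2 ≤ 1 + Complex.abs u ^ 2 by linarith)
  rwa [Real.sqrt_sq (Complex.abs.nonneg u)] at h

lemma sphDist_coe_coe (u v : ℂ) :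
    sphDist ↑u ↑v = Complex.abs (u - v) / (A u * A v) := rfl

lemma sphDist_coe_infty (u : ℂ) : sphDist ↑u ∞ = 1 / A u := rfl

lemma sphDist_infty_coe (u : ℂ) : sphDist ∞ ↑u = 1 / A u := rfl

lemma sphDist_infty_infty : sphDist ∞ ∞ = 0 := rfl

lemma sphDist_nonneg (x y : OnePoint ℂ) : 0 ≤ sphDist x y := by
  induction x using OnePoint.rec <;> induction y using OnePoint.rec <;>
    simp only [sphDist_coe_coe, sphDist_coe_infty, sphDist_infty_coe, sphDist_infty_infty]
  · exact le_refl 0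
  · exact div_nonneg one_pos.le (A_pos _).le
  · exact div_nonneg one_pos.le (A_pos _).le
  · exact div_nonneg (Complex.abs.nonneg _) (mul_pos (A_pos _) (A_pos _)).le

lemma sphDist_comm (x y : OnePoint ℂ) : sphDist x y = sphDist y x := by
  induction x using OnePoint.rec <;> induction y using OnePoint.rec <;>
    simp only [sphDist_coe_coe, sphDist_coe_infty, sphDist_infty_coe, sphDist_infty_infty]
  rw [AbsoluteValue.map_sub, mul_comm]

lemma key1 (v w : ℂ) : Complex.abs (1 + (starRingEnd ℂ) v * w) ≤ A v * A w := by
  have h1 : Complex.abs (1 + (starRingEnd ℂ) v * w) ≤ 1 + Complex.abs v * Complex.abs w := by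
    calc Complex.abs (1 + (starRingEnd ℂ) v * w)
        ≤ Complex.abs 1 + Complex.abs ((starRingEnd ℂ) v * w) := Complex.abs.add_le _ _
      _ = 1 + Complex.abs v * Complex.abs w := by
          rw [map_one, map_mul, Complex.abs_conj]
  have h2 : (1 + Complex.abs v * Complex.abs w) ^ 2 ≤ (A v * A w) ^ 2 := by
    have hv := A_sq v; have hw := A_sq w
    nlinarith [sq_nonneg (Complex.abs v - Complex.abs w), Complex.abs.nonneg v,
      Complex.abs.nonneg w]
  exact le_trans h1 (le_of_sq_le_sq h2 (mul_pos (A_pos v) (A_pos w)).le)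

lemma key2 (u v w : ℂ) :
    Complex.abs (u - w) * A v ≤ Complex.abs (u - v) * A w + Complex.abs (v - w) * A u := by
  have hid : (u - w) * (1 + (starRingEnd ℂ) v * v)
      = (u - v) * (1 + (starRingEnd ℂ) v * w) + (v - w) * (1 + (starRingEnd ℂ) v * u) := by
    ring
  have hconj : Complex.abs (1 + (starRingEnd ℂ) v * v) = A v ^ 2 := by
    rw [Complex.conj_mul']
    rw [show (1 : ℂ) + (‖v‖ : ℂ) ^ 2 = ((1 + ‖v‖ ^ 2 : ℝ) : ℂ) by push_cast; ring]
    rw [Complex.abs_ofReal, _root_.abs_of_nonneg (by positivity), A_sq, Complex.norm_eq_abs]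
  have h0 : Complex.abs (u - w) * (A v ^ 2)
      ≤ Complex.abs (u - v) * (A v * A w) + Complex.abs (v - w) * (A v * A u) := by
    calc Complex.abs (u - w) * (A v ^ 2)
        = Complex.abs ((u - w) * (1 + (starRingEnd ℂ) v * v)) := by rw [map_mul, hconj]
      _ = Complex.abs ((u - v) * (1 + (starRingEnd ℂ) v * w)
            + (v - w) * (1 + (starRingEnd ℂ) v * u)) := by rw [hid]
      _ ≤ Complex.abs ((u - v) * (1 + (starRingEnd ℂ) v * w))
            + Complex.abs ((v - w) * (1 + (starRingEnd ℂ) v * u)) := Complex.abs.add_le _ _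
      _ ≤ Complex.abs (u - v) * (A v * A w) + Complex.abs (v - w) * (A v * A u) := by
          rw [map_mul, map_mul]
          gcongr
          · exact key1 v w
          · exact key1 v u
  have hv := A_pos v
  nlinarith [Complex.abs.nonneg (u - w), one_le_A v]

lemma A_le_abs_add_A (u v : ℂ) : A v ≤ Complex.abs (u - v) + A u := by
  have hba : Complex.abs v ≤ Complex.abs u + Complex.abs (u - v) := by
    have h1 : ‖v‖ - ‖u‖ ≤ ‖v - u‖ := norm_sub_norm_le v u
    rw [norm_sub_rev] at h1
    simp only [Complex.norm_eq_abs] at h1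
    linarith
  have h2 : (1 : ℝ) + Complex.abs v ^ 2 ≤ (Complex.abs (u - v) + A u) ^ 2 := by
    nlinarith [A_sq u, abs_le_A u, Complex.abs.nonneg (u - v), Complex.abs.nonneg u,
      Complex.abs.nonneg v]
  have h3 : A v ^ 2 ≤ (Complex.abs (u - v) + A u) ^ 2 := by rw [A_sq]; exact h2
  exact le_of_sq_le_sq h3 (add_nonneg (Complex.abs.nonneg _) (A_pos u).le)

lemma gen1 {c p q : ℝ} (hp : 0 < p) (hq : 0 < q) (hc : 0 ≤ c) (h : p ≤ c + q) :
    1 / q ≤ 1 / p + c / (p * q) := by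
  rw [div_add_div _ _ hp.ne' (by positivity), div_le_div_iff₀ hq (by positivity)]
  nlinarith [mul_le_mul_of_nonneg_right h (mul_pos hp hq).le, mul_pos hp hq]

lemma gen2 {c p q : ℝ} (hp : 0 < p) (hq : 0 < q) (h : c ≤ p + q) :
    c / (p * q) ≤ 1 / p + 1 / q := by
  rw [div_add_div _ _ hp.ne' hq.ne', div_le_div_iff₀ (by positivity) (by positivity)]
  nlinarith [mul_le_mul_of_nonneg_right h (mul_pos hp hq).le, mul_pos hp hq]

lemma gen3 {c p q : ℝ} (hp : 0 < p) (hq : 0 < q) (hc : 0 ≤ c) (h : q ≤ c + p) :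
    1 / p ≤ c / (p * q) + 1 / q := by
  rw [div_add_div _ _ (by positivity : (p*q) ≠ 0) hq.ne', div_le_div_iff₀ hp (by positivity)]
  nlinarith [mul_le_mul_of_nonneg_right h (mul_pos hp hq).le, mul_pos hp hq]

lemma gen4 {X Y Z p q r : ℝ} (hp : 0 < p) (hq : 0 < q) (hr : 0 < r)
    (h : X * q ≤ Y * r + Z * p) : X / (p * r) ≤ Y / (p * q) + Z / (q * r) := by
  rw [div_add_div _ _ (by positivity : (p*q) ≠ 0) (by positivity : (q*r) ≠ 0),
    div_le_div_iff₀ (by positivity) (by positivity)]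
  nlinarith [mul_le_mul_of_nonneg_right h (by positivity : (0:ℝ) ≤ p * q * r),
    mul_pos (mul_pos hp hq) hr]

lemma sphDist_triangle (x y z : OnePoint ℂ) : sphDist x z ≤ sphDist x y + sphDist y z := by
  induction x using OnePoint.rec <;> induction y using OnePoint.rec <;>
      induction z using OnePoint.rec <;>
    simp only [sphDist_coe_coe, sphDist_coe_infty, sphDist_infty_coe, sphDist_infty_infty]
  · -- ∞ ∞ ∞
    norm_num
  · -- ∞ ∞ w
    rename_i w
    linarith [div_nonneg one_pos.le (A_pos w).le]
  · -- ∞ v ∞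
    rename_i v
    linarith [div_nonneg one_pos.le (A_pos v).le]
  · -- ∞ v w : 1/Aw ≤ 1/Av + |v-w|/(Av*Aw), i.e. Av ≤ c + Aw
    rename_i v w
    refine gen1 (A_pos v) (A_pos w) (Complex.abs.nonneg _) ?_
    have h := A_le_abs_add_A w v
    rw [AbsoluteValue.map_sub] at h
    linarith
  · -- u ∞ ∞
    rename_i u
    simp
  · -- u ∞ w : |u-w|/(Au*Aw) ≤ 1/Au + 1/Aw
    rename_i u w
    refine gen2 (A_pos u) (A_pos w) ?_
    have h1 : Complex.abs (u - w) ≤ Complex.abs u + Complex.abs w := by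
      have := norm_sub_le u w
      simpa only [Complex.norm_eq_abs] using this
    linarith [abs_le_A u, abs_le_A w]
  · -- u v ∞ : 1/Au ≤ |u-v|/(Au*Av) + 1/Av, i.e. Av ≤ c + Au
    rename_i u v
    exact gen3 (A_pos u) (A_pos v) (Complex.abs.nonneg _) (A_le_abs_add_A u v)
  · -- u v w
    rename_i u v w
    exact gen4 (A_pos u) (A_pos v) (A_pos w) (key2 u v w)

end SphAux
namespace SphAux

/-- The finite part of a point of the Riemann sphere. -/
def val : OnePoint ℂ → ℂ
  | (z : ℂ) => z
  | ∞ => 0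

lemma val_coe (z : ℂ) : val ↑z = z := rfl

lemma coe_val {x : OnePoint ℂ} (h : x ≠ ∞) : (val x : OnePoint ℂ) = x := by
  induction x using OnePoint.rec
  · exact absurd rfl h
  · rfl

lemma sphInv_coe_ne {u : ℂ} (h : u ≠ 0) : sphInv ↑u = ((u⁻¹ : ℂ) : OnePoint ℂ) := by
  simp [sphInv, h]

lemma sphInv_coe_zero : sphInv ((0 : ℂ) : OnePoint ℂ) = ∞ := by simp [sphInv]

lemma sphInv_infty : sphInv ∞ = ((0 : ℂ) : OnePoint ℂ) := rfl

lemma sphInv_sphInv (x : OnePoint ℂ) : sphInv (sphInv x) = x := by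
  induction x using OnePoint.rec with
  | infty => rw [sphInv_infty, sphInv_coe_zero]
  | coe u =>
    by_cases hu : u = 0
    · subst hu; rw [sphInv_coe_zero, sphInv_infty]
    · rw [sphInv_coe_ne hu, sphInv_coe_ne (inv_ne_zero hu), inv_inv]

lemma sphInv_ne_infty {u : ℂ} (h : u ≠ 0) : sphInv ↑u ≠ ∞ := by
  rw [sphInv_coe_ne h]; exact OnePoint.coe_ne_infty _

lemma A_zero : A 0 = 1 := by unfold A; simp

lemma A_inv {u : ℂ} (h : u ≠ 0) : A u⁻¹ = A u / Complex.abs u := by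
  have hb : 0 < Complex.abs u := Complex.abs.pos h
  unfold A
  rw [map_inv₀]
  rw [show 1 + (Complex.abs u)⁻¹ ^ 2 = (1 + Complex.abs u ^ 2) / (Complex.abs u ^ 2) by
    field_simp; ring]
  rw [Real.sqrt_div (by positivity), Real.sqrt_sq hb.le]

lemma one_le_A_mul_A (u v : ℂ) : 1 ≤ A u * A v := by
  nlinarith [one_le_A u, one_le_A v]

lemma sphDist_zero_inv {v : ℂ} (hv : v ≠ 0) :
    sphDist ((0:ℂ) : OnePoint ℂ) ↑(v⁻¹) = 1 / A v := by
  have hb : 0 < Complex.abs v := Complex.abs.pos hv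
  have hA := A_pos v
  rw [sphDist_coe_coe, A_inv hv, A_zero, zero_sub, AbsoluteValue.map_neg, map_inv₀]
  field_simp

lemma sphDist_inv_zero {v : ℂ} (hv : v ≠ 0) :
    sphDist ↑(v⁻¹) ((0:ℂ) : OnePoint ℂ) = 1 / A v := by
  rw [sphDist_comm]; exact sphDist_zero_inv hv

lemma sphDist_infty_inv {v : ℂ} (hv : v ≠ 0) :
    sphDist ∞ ↑(v⁻¹) = Complex.abs v / A v := by
  have hb : 0 < Complex.abs v := Complex.abs.pos hv
  have hA := A_pos v
  rw [sphDist_infty_coe, A_inv hv]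
  field_simp

lemma sphDist_sphInv (x y : OnePoint ℂ) :
    sphDist (sphInv x) (sphInv y) = sphDist x y := by
  have base0 : ∀ u v : ℂ, u ≠ 0 → v ≠ 0 → sphDist ↑(u⁻¹ : ℂ) ↑(v⁻¹ : ℂ) = sphDist ↑u ↑v := by
    intro u v hu hv
    have hbu : 0 < Complex.abs u := Complex.abs.pos hu
    have hbv : 0 < Complex.abs v := Complex.abs.pos hv
    have hAu := A_pos u
    have hAv := A_pos v
    rw [sphDist_coe_coe, sphDist_coe_coe, A_inv hu, A_inv hv]
    have h1 : u⁻¹ - v⁻¹ = (v - u) * (u⁻¹ * v⁻¹) := by field_simp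
    rw [h1, map_mul, map_mul, map_inv₀, map_inv₀, AbsoluteValue.map_sub]
    field_simp
  induction x using OnePoint.rec with
  | infty =>
    induction y using OnePoint.rec with
    | infty =>
      rw [sphInv_infty, sphDist_coe_coe, sphDist_infty_infty, sub_self, map_zero, zero_div]
    | coe v =>
      by_cases hv : v = 0
      · subst hv
        rw [sphInv_infty, sphInv_coe_zero, sphDist_coe_infty, sphDist_infty_coe]
      · rw [sphInv_infty, sphInv_coe_ne hv, sphDist_zero_inv hv, sphDist_infty_coe]
  | coe u =>
    induction y using OnePoint.rec with
    | infty =>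
      by_cases hu : u = 0
      · subst hu
        rw [sphInv_infty, sphInv_coe_zero, sphDist_infty_coe, sphDist_coe_infty]
      · rw [sphInv_infty, sphInv_coe_ne hu, sphDist_inv_zero hu, sphDist_coe_infty]
    | coe v =>
      by_cases hu : u = 0
      · subst hu
        by_cases hv : v = 0
        · subst hv
          rw [sphInv_coe_zero, sphDist_infty_infty, sphDist_coe_coe, sub_self, map_zero, zero_div]
        · rw [sphInv_coe_zero, sphInv_coe_ne hv, sphDist_infty_inv hv, sphDist_coe_coe, A_zero,
            zero_sub, AbsoluteValue.map_neg, one_mul]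
      · by_cases hv : v = 0
        · subst hv
          rw [sphInv_coe_zero, sphInv_coe_ne hu, sphDist_comm, sphDist_infty_inv hu,
            sphDist_coe_coe, A_zero, sub_zero, mul_one]
        · rw [sphInv_coe_ne hu, sphInv_coe_ne hv]
          exact base0 u v hu hv

lemma A_eq_inv_sphDist (u : ℂ) : A u = (sphDist ↑u ∞)⁻¹ := by
  rw [sphDist_coe_infty, one_div, inv_inv]

lemma abs_sub_eq_sphDist_mul (u v : ℂ) :
    Complex.abs (u - v) = sphDist ↑u ↑v * (A u * A v) := by
  rw [sphDist_coe_coe, div_mul_cancel₀]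
  exact (mul_pos (A_pos u) (A_pos v)).ne' 

lemma sphDist_coe_coe_le_abs (u v : ℂ) : sphDist ↑u ↑v ≤ Complex.abs (u - v) := by
  rw [sphDist_coe_coe]
  exact div_le_self (Complex.abs.nonneg _) (one_le_A_mul_A u v)

end SphAux
namespace SphAux

lemma strip_translate {a b : EReal} {z : ℂ} (hz : z ∈ Strip a b) (τ : ℝ) :
    z + (τ : ℂ) ∈ Strip a b := by
  have him : (z + (τ : ℂ)).im = z.im := by simp
  constructor
  · rw [him]; exact hz.1
  · rw [him]; exact hz.2

lemma strip_subset {a b : EReal} {α β : ℝ} (hα : a < (α : EReal)) (hβ : (β : EReal) < b) :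
    Strip (α : EReal) (β : EReal) ⊆ Strip a b := fun z hz =>
  ⟨lt_trans hα hz.1, lt_trans hz.2 hβ⟩

lemma mem_strip_iff {α β : ℝ} {z : ℂ} :
    z ∈ Strip (α : EReal) (β : EReal) ↔ α < z.im ∧ z.im < β := by
  constructor
  · rintro ⟨h1, h2⟩; exact ⟨EReal.coe_lt_coe_iff.mp h1, EReal.coe_lt_coe_iff.mp h2⟩
  · rintro ⟨h1, h2⟩; exact ⟨EReal.coe_lt_coe_iff.mpr h1, EReal.coe_lt_coe_iff.mpr h2⟩

lemma strip_isOpen (α β : ℝ) : IsOpen (Strip (α : EReal) (β : EReal)) := by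
  have : Strip (α : EReal) (β : EReal) = Complex.im ⁻¹' (Set.Ioo α β) := by
    ext z; simp [mem_strip_iff, Set.mem_Ioo]
  rw [this]
  exact isOpen_Ioo.preimage Complex.continuous_im

lemma strip_convex (α β : ℝ) : Convex ℝ (Strip (α : EReal) (β : EReal)) := by
  have : Strip (α : EReal) (β : EReal) = Complex.im ⁻¹' (Set.Ioo α β) := by
    ext z; simp [mem_strip_iff, Set.mem_Ioo]
  rw [this]
  exact (convex_Ioo α β).linear_preimage Complex.imLm

lemma strip_preconnected (α β : ℝ) :
    IsPreconnected (Strip (α : EReal) (β : EReal)) :=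
  (strip_convex α β).isPreconnected

lemma exists_strip_bounds {a b : EReal} {z₀ : ℂ} (hz₀ : z₀ ∈ Strip a b) :
    ∃ α β : ℝ, a < (α : EReal) ∧ α < z₀.im ∧ z₀.im < β ∧ (β : EReal) < b := by
  obtain ⟨α, hαa, hα⟩ := EReal.lt_iff_exists_real_btwn.mp hz₀.1
  obtain ⟨β, hβ, hβb⟩ := EReal.lt_iff_exists_real_btwn.mp hz₀.2
  exact ⟨α, β, hαa, EReal.coe_lt_coe_iff.mp hα, EReal.coe_lt_coe_iff.mp hβ, hβb⟩

lemma ball_subset_strip {α β : ℝ} {z₀ : ℂ} {r : ℝ} (h1 : α < z₀.im) (h2 : z₀.im < β)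
    (hr : r ≤ min (z₀.im - α) (β - z₀.im)) :
    Metric.ball z₀ r ⊆ Strip (α : EReal) (β : EReal) := by
  intro z hz
  rw [Metric.mem_ball, Complex.dist_eq] at hz
  have him : |z.im - z₀.im| ≤ Complex.abs (z - z₀) := by
    have := Complex.abs_im_le_norm (z - z₀)
    exact (by simpa using this : |z.im - z₀.im| ≤ ‖z - z₀‖)
  have h3 : |z.im - z₀.im| < r := lt_of_le_of_lt him hz
  rw [abs_lt] at h3
  refine mem_strip_iff.mpr ⟨?_, ?_⟩
  · have := le_trans hr (min_le_left _ _); linarith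
  · have := le_trans hr (min_le_right _ _); linarith

lemma sphDist_infty_pos {x : OnePoint ℂ} (h : x ≠ ∞) : 0 < sphDist x ∞ := by
  induction x using OnePoint.rec with
  | infty => exact absurd rfl h
  | coe u => rw [sphDist_coe_infty]; exact div_pos one_pos (A_pos u)

lemma val_sub_le {x y : OnePoint ℂ} {c : ℝ} (hc : 0 < c) (hx : c ≤ sphDist x ∞)
    (hy : c ≤ sphDist y ∞) :
    Complex.abs (val x - val y) ≤ sphDist x y / (c * c) := by
  induction x using OnePoint.rec with
  | infty => rw [sphDist_infty_infty] at hx; linarith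
  | coe u =>
    induction y using OnePoint.rec with
    | infty => rw [sphDist_infty_infty] at hy; linarith
    | coe v =>
      rw [val_coe, val_coe, abs_sub_eq_sphDist_mul]
      have hAu : A u ≤ 1 / c := by
        rw [sphDist_coe_infty, le_div_iff₀ (A_pos u)] at hx
        rw [le_div_iff₀ hc]; linarith
      have hAv : A v ≤ 1 / c := by
        rw [sphDist_coe_infty, le_div_iff₀ (A_pos v)] at hy
        rw [le_div_iff₀ hc]; linarith
      calc sphDist ↑u ↑v * (A u * A v) ≤ sphDist ↑u ↑v * (1/c * (1/c)) := by
            apply mul_le_mul_of_nonneg_left _ (sphDist_nonneg _ _)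
            exact mul_le_mul hAu hAv (A_pos v).le (by positivity)
        _ = sphDist ↑u ↑v / (c * c) := by field_simp
  

lemma finite_rep {f : ℂ → OnePoint ℂ} {U : Set ℂ} (hf : SphMeromorphicOn f U) {ζ : ℂ}
    (hζ : ζ ∈ U) (hfin : f ζ ≠ ∞) :
    ∃ h : ℂ → ℂ, AnalyticAt ℂ h ζ ∧ ∀ᶠ w in 𝓝 ζ, f w = ↑(h w) := by
  rcases hf ζ hζ with ⟨h, hh, hev⟩ | ⟨h, hh, _, hev⟩
  · exact ⟨h, hh, hev⟩
  · have h0 : h ζ ≠ 0 := by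
      intro h0
      apply hfin
      rw [hev.self_of_nhds, h0, sphInv_coe_zero]
    refine ⟨fun w => (h w)⁻¹, hh.inv h0, ?_⟩
    filter_upwards [hev, hh.continuousAt.eventually_ne h0] with w h1 h2
    rw [h1, sphInv_coe_ne h2]

lemma finite_rep_inv {f : ℂ → OnePoint ℂ} {U : Set ℂ} (hf : SphMeromorphicOn f U) {ζ : ℂ}
    (hζ : ζ ∈ U) (hfin : sphInv (f ζ) ≠ ∞) :
    ∃ h : ℂ → ℂ, AnalyticAt ℂ h ζ ∧ ∀ᶠ w in 𝓝 ζ, sphInv (f w) = ↑(h w) := by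
  rcases hf ζ hζ with ⟨h, hh, hev⟩ | ⟨h, hh, _, hev⟩
  · have h0 : h ζ ≠ 0 := by
      intro h0
      apply hfin
      rw [hev.self_of_nhds, h0, sphInv_coe_zero]
    refine ⟨fun w => (h w)⁻¹, hh.inv h0, ?_⟩
    filter_upwards [hev, hh.continuousAt.eventually_ne h0] with w h1 h2
    rw [h1, sphInv_coe_ne h2]
  · refine ⟨h, hh, ?_⟩
    filter_upwards [hev] with w h1
    rw [h1, sphInv_sphInv]

lemma sph_cont {f : ℂ → OnePoint ℂ} {ζ : ℂ} {h : ℂ → ℂ} (hh : AnalyticAt ℂ h ζ)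
    (hev : ∀ᶠ w in 𝓝 ζ, f w = ↑(h w)) {ε : ℝ} (hε : 0 < ε) :
    ∀ᶠ w in 𝓝 ζ, sphDist (f w) (f ζ) < ε := by
  have hc : ∀ᶠ w in 𝓝 ζ, dist (h w) (h ζ) < ε :=
    hh.continuousAt.tendsto.eventually (Metric.ball_mem_nhds _ hε)
  filter_upwards [hev, hc] with w h1 h2
  rw [h1, hev.self_of_nhds]
  refine lt_of_le_of_lt (sphDist_coe_coe_le_abs _ _) ?_
  rwa [Complex.dist_eq] at h2

end SphAux
namespace SphAux

lemma limit_finite_rep {a b : EReal} {F g : ℂ → OnePoint ℂ} {t : ℕ → ℝ}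
    (hrep : ∀ ζ ∈ Strip a b, F ζ ≠ ∞ →
      ∃ h : ℂ → ℂ, AnalyticAt ℂ h ζ ∧ ∀ᶠ w in 𝓝 ζ, F w = ↑(h w))
    (hconv : ∀ α β : ℝ, a < (α : EReal) → α < β → (β : EReal) < b →
      ∀ ε > (0 : ℝ), ∀ᶠ n in atTop,
        ∀ z ∈ Strip (α : EReal) (β : EReal), sphDist (F (z + t n)) (g z) < ε)
    {z₀ : ℂ} (hz₀ : z₀ ∈ Strip a b) (hfin : g z₀ ≠ ∞) :
    ∃ r > 0, Metric.ball z₀ r ⊆ Strip a b ∧ (∀ z ∈ Metric.ball z₀ r, g z ≠ ∞) ∧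
      DifferentiableOn ℂ (fun z => val (g z)) (Metric.ball z₀ r) := by
  obtain ⟨α, β, hαa, hα, hβ, hβb⟩ := exists_strip_bounds hz₀
  have hαβ : α < β := lt_trans hα hβ
  have hsub : Strip (α : EReal) (β : EReal) ⊆ Strip a b := strip_subset hαa hβb
  have hz₀' : z₀ ∈ Strip (α : EReal) (β : EReal) := mem_strip_iff.mpr ⟨hα, hβ⟩
  set δ : ℝ := sphDist (g z₀) ∞ with hδdef
  have hδ : 0 < δ := sphDist_infty_pos hfin
  -- choose n₀ with uniform δ/8 approximation
  obtain ⟨n₀, hn₀⟩ := (hconv α β hαa hαβ hβb (δ/8) (by positivity)).exists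
  have hF0fin : F (z₀ + t n₀) ≠ ∞ := by
    intro h
    have h1 := hn₀ z₀ hz₀'
    rw [h, sphDist_comm] at h1
    rw [hδdef] at hδ
    have h2 : sphDist (g z₀) ∞ ≤ sphDist (g z₀) ∞ / 8 := le_of_lt h1
    linarith [hδ]
  obtain ⟨h₀, hh₀, hev₀⟩ := hrep _ (hsub (strip_translate hz₀' (t n₀))) hF0fin
  -- continuity of F (· + t n₀) at z₀, spherical
  have hT : Filter.Tendsto (fun w : ℂ => w + (t n₀ : ℂ)) (𝓝 z₀) (𝓝 (z₀ + t n₀)) :=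
    (continuous_id.add continuous_const).tendsto z₀
  have hcont : ∀ᶠ w in 𝓝 z₀, sphDist (F (w + t n₀)) (F (z₀ + t n₀)) < δ/8 :=
    hT.eventually (sph_cont hh₀ hev₀ (by positivity))
  have hstrip_ev : ∀ᶠ w in 𝓝 z₀, w ∈ Strip (α : EReal) (β : EReal) :=
    (strip_isOpen α β).mem_nhds hz₀'
  obtain ⟨r, hr, hball⟩ := Metric.eventually_nhds_iff_ball.mp (hcont.and hstrip_ev)
  refine ⟨r, hr, fun z hz => hsub (hball z hz).2, ?_, ?_⟩
  · intro z hz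
    intro hzinf
    have h1 := (hball z hz).1
    have h2 := hn₀ z (hball z hz).2
    have h3 := hn₀ z₀ hz₀'
    -- δ = sphDist (g z₀) ∞ ≤ sph(g z₀, F z₀') + sph(F z₀', F z') + sph(F z', g z) + sph(g z, ∞)
    have t1 : δ ≤ sphDist (g z₀) (F (z₀ + t n₀)) + sphDist (F (z₀ + t n₀)) ∞ :=
      sphDist_triangle _ _ _
    have t2 : sphDist (F (z₀ + t n₀)) ∞ ≤ sphDist (F (z₀ + t n₀)) (F (z + t n₀))
        + sphDist (F (z + t n₀)) ∞ := sphDist_triangle _ _ _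
    have t3 : sphDist (F (z + t n₀)) ∞ = sphDist (F (z + t n₀)) (g z) := by rw [hzinf]
    rw [sphDist_comm] at h3
    rw [sphDist_comm (F (z₀ + t n₀)) (F (z + t n₀))] at t2
    linarith
  · -- differentiability via Weierstrass
    -- lower bounds on the ball
    have hglow : ∀ z ∈ Metric.ball z₀ r, 5*δ/8 ≤ sphDist (g z) ∞ := by
      intro z hz
      have h1 := (hball z hz).1
      have h2 := hn₀ z (hball z hz).2
      have h3 := hn₀ z₀ hz₀'
      have t1 : δ ≤ sphDist (g z₀) (g z) + sphDist (g z) ∞ := sphDist_triangle _ _ _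
      have t2 : sphDist (g z₀) (g z) ≤ sphDist (g z₀) (F (z₀ + t n₀))
          + sphDist (F (z₀ + t n₀)) (g z) := sphDist_triangle _ _ _
      have t3 : sphDist (F (z₀ + t n₀)) (g z) ≤ sphDist (F (z₀ + t n₀)) (F (z + t n₀))
          + sphDist (F (z + t n₀)) (g z) := sphDist_triangle _ _ _
      rw [sphDist_comm] at h3
      rw [sphDist_comm (F (z + t n₀)) (F (z₀ + t n₀))] at h1
      linarith
    have hkey : ∀ m : ℕ, (∀ z ∈ Strip (α : EReal) (β : EReal),
        sphDist (F (z + t m)) (g z) < δ/8) →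
        ∀ z ∈ Metric.ball z₀ r, δ/2 ≤ sphDist (F (z + t m)) ∞ := by
      intro m hm z hz
      have h2 := hm z (hball z hz).2
      have t1 : sphDist (g z) ∞ ≤ sphDist (g z) (F (z + t m)) + sphDist (F (z + t m)) ∞ :=
        sphDist_triangle _ _ _
      rw [sphDist_comm] at h2
      have := hglow z hz
      linarith
    -- uniform convergence of the finite parts
    have hucv : TendstoUniformlyOn (fun m z => val (F (z + t m))) (fun z => val (g z))
        atTop (Metric.ball z₀ r) := by
      rw [Metric.tendstoUniformlyOn_iff]
      intro ε hε
      have hε' : 0 < min (δ/8) (ε * δ^2 / 8) := by positivity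
      filter_upwards [hconv α β hαa hαβ hβb _ hε'] with m hm z hz
      have hm8 : ∀ z ∈ Strip (α : EReal) (β : EReal), sphDist (F (z + t m)) (g z) < δ/8 :=
        fun z hz => lt_of_lt_of_le (hm z hz) (min_le_left _ _)
      have hFlow := hkey m hm8 z hz
      have hglow' := hglow z hz
      have hδ4 : (0:ℝ) < δ/2 := by positivity
      have hb := val_sub_le hδ4 hFlow (le_trans (by linarith) hglow')
      rw [dist_comm, Complex.dist_eq]
      refine lt_of_le_of_lt hb ?_
      have h2 := lt_of_lt_of_le (hm z (hball z hz).2) (min_le_right _ _)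
      rw [div_lt_iff₀ (by positivity : (0:ℝ) < δ/2 * (δ/2))]
      calc sphDist (F (z + t m)) (g z) < ε * δ^2 / 8 := h2
        _ ≤ ε * (δ/2 * (δ/2)) := by nlinarith
  -- eventual differentiability
    have hdiff : ∀ᶠ m in atTop, DifferentiableOn ℂ (fun z => val (F (z + t m)))
        (Metric.ball z₀ r) := by
      filter_upwards [hconv α β hαa hαβ hβb (δ/8) (by positivity)] with m hm
      intro z hz
      have hFfin : F (z + t m) ≠ ∞ := by
        intro hinf
        have := hkey m hm z hz
        rw [hinf, sphDist_infty_infty] at this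
        linarith
      obtain ⟨h, hh, hev⟩ := hrep _ (hsub (strip_translate (hball z hz).2 (t m))) hFfin
      have hT' : Filter.Tendsto (fun w : ℂ => w + (t m : ℂ)) (𝓝 z) (𝓝 (z + t m)) :=
        (continuous_id.add continuous_const).tendsto z
      have heq : (fun w => val (F (w + t m))) =ᶠ[𝓝 z] (fun w => h (w + t m)) := by
        filter_upwards [hT'.eventually hev] with w hw
        rw [hw, val_coe]
      have hda : DifferentiableAt ℂ (fun w => h (w + t m)) z := by
        have h1 : AnalyticAt ℂ (fun w : ℂ => w + (t m : ℂ)) z := by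
          apply AnalyticAt.add
          · exact analyticAt_id
          · exact analyticAt_const
        have : AnalyticAt ℂ (fun w => h (w + (t m : ℂ))) z := AnalyticAt.comp hh h1
        exact this.differentiableAt
      exact (heq.differentiableAt_iff.mpr hda).differentiableWithinAt
    exact (hucv.tendstoLocallyUniformlyOn).differentiableOn hdiff Metric.isOpen_ball

end SphAux
namespace SphAux

lemma hconv_inv {a b : EReal} {f g : ℂ → OnePoint ℂ} {t : ℕ → ℝ}
    (hconv : ∀ α β : ℝ, a < (α : EReal) → α < β → (β : EReal) < b →
      ∀ ε > (0 : ℝ), ∀ᶠ n in atTop,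
        ∀ z ∈ Strip (α : EReal) (β : EReal), sphDist (f (z + t n)) (g z) < ε) :
    ∀ α β : ℝ, a < (α : EReal) → α < β → (β : EReal) < b →
      ∀ ε > (0 : ℝ), ∀ᶠ n in atTop,
        ∀ z ∈ Strip (α : EReal) (β : EReal),
          sphDist (sphInv (f (z + t n))) (sphInv (g z)) < ε := by
  intro α β hα hαβ hβ ε hε
  filter_upwards [hconv α β hα hαβ hβ ε hε] with n hn z hz
  rw [sphDist_sphInv]
  exact hn z hz

lemma no_infty_ball {a b : EReal} {f g : ℂ → OnePoint ℂ} {t : ℕ → ℝ}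
    (hf : SphMeromorphicOn f (Strip a b))
    (hconv : ∀ α β : ℝ, a < (α : EReal) → α < β → (β : EReal) < b →
      ∀ ε > (0 : ℝ), ∀ᶠ n in atTop,
        ∀ z ∈ Strip (α : EReal) (β : EReal), sphDist (f (z + t n)) (g z) < ε)
    {z₀ : ℂ} (hz₀ : z₀ ∈ Strip a b) (hev : ∀ᶠ z in 𝓝 z₀, g z = ∞) : False := by
  obtain ⟨α, β, hαa, hα, hβ, hβb⟩ := exists_strip_bounds hz₀
  have hαβ : α < β := lt_trans hα hβ
  have hsub : Strip (α : EReal) (β : EReal) ⊆ Strip a b := strip_subset hαa hβb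
  have hz₀' : z₀ ∈ Strip (α : EReal) (β : EReal) := mem_strip_iff.mpr ⟨hα, hβ⟩
  set W : Set ℂ := {z | ∀ᶠ w in 𝓝 z, g w = ∞} with hWdef
  have hWopen : IsOpen W := isOpen_setOf_eventually_nhds
  have hrepf : ∀ ζ ∈ Strip a b, f ζ ≠ ∞ →
      ∃ h : ℂ → ℂ, AnalyticAt ℂ h ζ ∧ ∀ᶠ w in 𝓝 ζ, f w = ↑(h w) :=
    fun ζ hζ => finite_rep hf hζ
  have hrepf' : ∀ ζ ∈ Strip a b, sphInv (f ζ) ≠ ∞ →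
      ∃ h : ℂ → ℂ, AnalyticAt ℂ h ζ ∧ ∀ᶠ w in 𝓝 ζ, sphInv (f w) = ↑(h w) :=
    fun ζ hζ => finite_rep_inv hf hζ
  have hclosed : closure W ∩ Strip (α : EReal) (β : EReal) ⊆ W := by
    rintro z₁ ⟨hz₁c, hz₁S⟩
    have hz₁ab : z₁ ∈ Strip a b := hsub hz₁S
    have hg₁ : g z₁ = ∞ := by
      by_contra hne
      obtain ⟨r, hr, hballsub, hgfin, _⟩ := limit_finite_rep hrepf hconv hz₁ab hne
      obtain ⟨w, hwW, hwd⟩ := Metric.mem_closure_iff.mp hz₁c r hr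
      have hwball : w ∈ Metric.ball z₁ r := by rwa [Metric.mem_ball, dist_comm]
      exact hgfin w hwball hwW.self_of_nhds
    have hfin' : sphInv (g z₁) ≠ ∞ := by
      rw [hg₁, sphInv_infty]; exact OnePoint.coe_ne_infty _
    obtain ⟨r, hr, hballsub, hgfin', hdiff⟩ :=
      limit_finite_rep hrepf' (hconv_inv hconv) hz₁ab hfin'
    obtain ⟨w, hwW, hwd⟩ := Metric.mem_closure_iff.mp hz₁c r hr
    have hwball : w ∈ Metric.ball z₁ r := by rwa [Metric.mem_ball, dist_comm]
    have hGz : (fun z => val (sphInv (g z))) =ᶠ[𝓝 w] 0 := by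
      filter_upwards [hwW] with x hx
      rw [hx, sphInv_infty, val_coe]
      rfl
    have han : AnalyticOnNhd ℂ (fun z => val (sphInv (g z))) (Metric.ball z₁ r) :=
      hdiff.analyticOnNhd Metric.isOpen_ball
    have hEq := han.eqOn_zero_of_preconnected_of_eventuallyEq_zero
      (convex_ball z₁ r).isPreconnected hwball hGz
    show ∀ᶠ z in 𝓝 z₁, g z = ∞
    filter_upwards [Metric.ball_mem_nhds z₁ hr] with z hz
    have h0 : val (sphInv (g z)) = 0 := hEq hz
    have h2 : sphInv (g z) = ((0 : ℂ) : OnePoint ℂ) := by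
      rw [← coe_val (hgfin' z hz), h0]
    have h3 := congrArg sphInv h2
    rwa [sphInv_sphInv, sphInv_coe_zero] at h3
  have hWS : Strip (α : EReal) (β : EReal) ⊆ W :=
    (strip_preconnected α β).subset_of_closure_inter_subset hWopen ⟨z₀, hz₀', hev⟩ hclosed
  -- find a point of the substrip where f is finite
  obtain ⟨z₁, hz₁S, hz₁fin⟩ : ∃ z₁ ∈ Strip (α : EReal) (β : EReal), f z₁ ≠ ∞ := by
    rcases hf z₀ hz₀ with ⟨h, hh, hevf⟩ | ⟨h, hh, hne, hevf⟩
    · exact ⟨z₀, hz₀', by rw [hevf.self_of_nhds]; exact OnePoint.coe_ne_infty _⟩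
    · have hfreq : ∃ᶠ z in 𝓝 z₀, ¬ h z = 0 := Filter.not_eventually.mp hne
      obtain ⟨z₁, hz₁0, hz₁f, hz₁S⟩ :=
        (hfreq.and_eventually (hevf.and ((strip_isOpen α β).mem_nhds hz₀'))).exists
      refine ⟨z₁, hz₁S, ?_⟩
      rw [hz₁f, sphInv_coe_ne hz₁0]
      exact OnePoint.coe_ne_infty _
  have hc : 0 < sphDist (f z₁) ∞ := sphDist_infty_pos hz₁fin
  obtain ⟨n, hn⟩ := (hconv α β hαa hαβ hβb _ hc).exists
  have hzmem : z₁ - (t n : ℂ) ∈ Strip (α : EReal) (β : EReal) := by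
    rw [mem_strip_iff] at hz₁S ⊢
    simpa using hz₁S
  have hg : g (z₁ - (t n : ℂ)) = ∞ := (hWS hzmem).self_of_nhds
  have := hn _ hzmem
  rw [hg, show z₁ - (t n : ℂ) + (t n : ℂ) = z₁ by ring] at this
  exact lt_irrefl _ this

end SphAux

open SphAux in
/-- If the real translates `f(· + tₙ)` of a meromorphic almost
periodic function converge uniformly on every substrip (w.r.t. the spherical metric)
to `g`, then `g` is a meromorphic almost periodic function. -/
theorem meromorphicAP_limit_of_translates (a b : EReal) (hab : a < b)
    (f g : ℂ → OnePoint ℂ) (t : ℕ → ℝ) (hf : MeromorphicAPOn f a b)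
    (hconv : ∀ α β : ℝ, a < (α : EReal) → α < β → (β : EReal) < b →
      ∀ ε > (0 : ℝ), ∀ᶠ n in atTop,
        ∀ z ∈ Strip (α : EReal) (β : EReal), sphDist (f (z + t n)) (g z) < ε) :
    MeromorphicAPOn g a b := by
  obtain ⟨hfm, hfap⟩ := hf
  constructor
  · -- meromorphy of g
    intro z₀ hz₀
    by_cases hfin : g z₀ = ∞
    · -- pole case
      have hfin' : sphInv (g z₀) ≠ ∞ := by
        rw [hfin, sphInv_infty]; exact OnePoint.coe_ne_infty _
      obtain ⟨r, hr, hsub, hgfin, hdiff⟩ :=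
        limit_finite_rep (fun ζ hζ => finite_rep_inv hfm hζ) (hconv_inv hconv) hz₀ hfin'
      set G := fun z => val (sphInv (g z)) with hGdef
      by_cases hzero : ∀ᶠ z in 𝓝 z₀, G z = 0
      · exfalso
        apply no_infty_ball hfm hconv hz₀
        filter_upwards [hzero, Metric.ball_mem_nhds z₀ hr] with z h0 hzb
        have h2 : sphInv (g z) = ((0 : ℂ) : OnePoint ℂ) := by
          rw [← coe_val (hgfin z hzb), show val (sphInv (g z)) = 0 from h0]
        have h3 := congrArg sphInv h2
        rwa [sphInv_sphInv, sphInv_coe_zero] at h3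
      · right
        refine ⟨G, hdiff.analyticAt (Metric.ball_mem_nhds z₀ hr), hzero, ?_⟩
        filter_upwards [Metric.ball_mem_nhds z₀ hr] with z hz
        have h2 : sphInv (g z) = ((G z : ℂ) : OnePoint ℂ) := (coe_val (hgfin z hz)).symm
        have h3 := congrArg sphInv h2
        rwa [sphInv_sphInv] at h3
    · -- analytic case
      left
      obtain ⟨r, hr, hsub, hgfin, hdiff⟩ :=
        limit_finite_rep (fun ζ hζ => finite_rep hfm hζ) hconv hz₀ hfin
      refine ⟨fun z => val (g z), hdiff.analyticAt (Metric.ball_mem_nhds z₀ hr), ?_⟩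
      filter_upwards [Metric.ball_mem_nhds z₀ hr] with z hz
      exact (coe_val (hgfin z hz)).symm
  · -- almost periodicity of g
    intro ε hε α β hα hαβ hβ
    obtain ⟨n, hn⟩ := (hconv α β hα hαβ hβ (ε/4) (by positivity)).exists
    obtain ⟨L, hL, hLprop⟩ := hfap (ε/4) (by positivity) α β hα hαβ hβ
    refine ⟨L, hL, fun x => ?_⟩
    obtain ⟨τ, hτE, h1, h2⟩ := hLprop x
    refine ⟨τ, ?_, h1, h2⟩
    intro z hz
    have hz' : z + (τ : ℂ) ∈ Strip (α : EReal) (β : EReal) := strip_translate hz τ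
    have hzt : z + (t n : ℂ) ∈ Strip (α : EReal) (β : EReal) := strip_translate hz (t n)
    have e1 : sphDist (f (z + (τ:ℂ) + (t n : ℂ))) (g (z + (τ:ℂ))) < ε/4 := hn _ hz'
    have e2 : sphDist (f (z + (t n : ℂ))) (g z) < ε/4 := hn z hz
    have e3 : sphDist (f (z + (t n : ℂ) + (τ:ℂ))) (f (z + (t n : ℂ))) < ε/4 := hτE _ hzt
    have eq1 : z + (τ:ℂ) + (t n : ℂ) = z + (t n : ℂ) + (τ:ℂ) := by ring
    rw [eq1] at e1
    have t1 : sphDist (g (z + (τ:ℂ))) (g z)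
        ≤ sphDist (g (z + (τ:ℂ))) (f (z + (t n : ℂ) + (τ:ℂ)))
          + sphDist (f (z + (t n : ℂ) + (τ:ℂ))) (g z) := sphDist_triangle _ _ _
    have t2 : sphDist (f (z + (t n : ℂ) + (τ:ℂ))) (g z)
        ≤ sphDist (f (z + (t n : ℂ) + (τ:ℂ))) (f (z + (t n : ℂ)))
          + sphDist (f (z + (t n : ℂ))) (g z) := sphDist_triangle _ _ _
    have c1 := sphDist_comm (g (z + (τ:ℂ))) (f (z + (t n : ℂ) + (τ:ℂ)))
    linarith
end
end
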